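/- arXiv:1601.02274 — 5 statements merged into one kernel-verified Lean document; each statement's English description precedes it below -/
import Mathlib

section
/- Let A and B be associative unital k-algebras and τ : B⊗A → A⊗B a k-linear map with τ(b⊗1) = 1⊗b and τ(1⊗a) = a⊗1 that satisfies the associativity constraint τ∘(m_B⊗m_A) = m_τ∘(τ⊗τ)∘(id_B⊗τ⊗id_A), where m_τ = (m_A⊗m_B)∘(id_A⊗τ⊗id_B). Then (A⊗B, m_τ) is an associative unital algebra with unit 1⊗1. -/
/-!
Write `a ⊗ b = (a ⊗ 1)(1 ⊗ b)` in the ordinary tensor product algebra. Then `m_τ` commutes with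
left multiplication by `a ⊗ 1` and right multiplication by `1 ⊗ b`, and the associativity
constraint specialised at `a = 1` or `b' = 1` says that `τ` is compatible with the multiplication
of `B` resp. `A`. These four rules move the outer factors of a triple product out of `m_τ`, so
that both bracketings of `(a ⊗ b)(a' ⊗ b')(a'' ⊗ b'')` become
`(a ⊗ 1) m_τ(τ(b ⊗ a'), τ(b' ⊗ a'')) (1 ⊗ b'')`.
-/

open TensorProduct

namespace TwistedTensorProduct

section Extension

variable {R N P : Type*} [CommSemiring R] [AddCommMonoid N] [Module R N]
  [AddCommMonoid P] [Module R P]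

theorem assoc_of_tmul (M : N ⊗[R] P →ₗ[R] N ⊗[R] P →ₗ[R] N ⊗[R] P)
    (h : ∀ (n n' n'' : N) (p p' p'' : P),
      M (M (n ⊗ₜ p) (n' ⊗ₜ p')) (n'' ⊗ₜ p'') = M (n ⊗ₜ p) (M (n' ⊗ₜ p') (n'' ⊗ₜ p'')))
    (x y z : N ⊗[R] P) : M (M x y) z = M x (M y z) := by
  induction x using TensorProduct.induction_on with
  | zero => simp
  | add x₁ x₂ h₁ h₂ => simp only [map_add, LinearMap.add_apply, h₁, h₂]
  | tmul n p =>
    induction y using TensorProduct.induction_on with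
    | zero => simp
    | add y₁ y₂ h₁ h₂ => simp only [map_add, LinearMap.add_apply, h₁, h₂]
    | tmul n' p' =>
      induction z using TensorProduct.induction_on with
      | zero => simp
      | add z₁ z₂ h₁ h₂ => simp only [map_add, h₁, h₂]
      | tmul n'' p'' => exact h n n' n'' p p' p''

end Extension

variable {R A B : Type*} [CommSemiring R] [Semiring A] [Algebra R A] [Semiring B] [Algebra R B]
  {τ : B ⊗[R] A →ₗ[R] A ⊗[R] B} {M : A ⊗[R] B →ₗ[R] A ⊗[R] B →ₗ[R] A ⊗[R] B}

theorem tmul_one_mul_one_tmul (a : A) (b : B) :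
    (a ⊗ₜ[R] (1 : B)) * ((1 : A) ⊗ₜ b) = a ⊗ₜ b := by
  rw [Algebra.TensorProduct.tmul_mul_tmul, mul_one, one_mul]

variable (hM : ∀ (a a' : A) (b b' : B),
  M (a ⊗ₜ b) (a' ⊗ₜ b') = (a ⊗ₜ[R] (1 : B)) * τ (b ⊗ₜ a') * ((1 : A) ⊗ₜ b'))
include hM

theorem map_tmul_one_mul_left (a : A) (x y : A ⊗[R] B) :
    M ((a ⊗ₜ 1) * x) y = (a ⊗ₜ 1) * M x y := by
  induction x using TensorProduct.induction_on with
  | zero => simp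
  | add x₁ x₂ h₁ h₂ => simp only [mul_add, map_add, LinearMap.add_apply, h₁, h₂]
  | tmul a₁ b₁ =>
    induction y using TensorProduct.induction_on with
    | zero => simp
    | add y₁ y₂ h₁ h₂ => simp only [map_add, mul_add, h₁, h₂]
    | tmul a₂ b₂ => simp only [hM, Algebra.TensorProduct.tmul_mul_tmul, ← mul_assoc, one_mul]

theorem map_mul_one_tmul_right (b : B) (x y : A ⊗[R] B) :
    M x (y * ((1 : A) ⊗ₜ b)) = M x y * ((1 : A) ⊗ₜ b) := by
  induction x using TensorProduct.induction_on with
  | zero => simp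
  | add x₁ x₂ h₁ h₂ => simp only [map_add, LinearMap.add_apply, add_mul, h₁, h₂]
  | tmul a₁ b₁ =>
    induction y using TensorProduct.induction_on with
    | zero => simp
    | add y₁ y₂ h₁ h₂ => simp only [add_mul, map_add, h₁, h₂]
    | tmul a₂ b₂ => simp only [hM, Algebra.TensorProduct.tmul_mul_tmul, mul_assoc, mul_one]

theorem map_mul_one_tmul_tmul_one
    (hτ_mul : ∀ (b b' : B) (a : A), τ ((b * b') ⊗ₜ a) = M ((1 : A) ⊗ₜ b) (τ (b' ⊗ₜ a)))
    (x : A ⊗[R] B) (b : B) (a : A) :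
    M (x * ((1 : A) ⊗ₜ b)) (a ⊗ₜ 1) = M x (τ (b ⊗ₜ a)) := by
  induction x using TensorProduct.induction_on with
  | zero => simp
  | add x₁ x₂ h₁ h₂ => simp only [add_mul, map_add, LinearMap.add_apply, h₁, h₂]
  | tmul a₁ b₁ =>
    rw [Algebra.TensorProduct.tmul_mul_tmul, mul_one, hM, hτ_mul,
      ← Algebra.TensorProduct.one_def, mul_one,
      ← map_tmul_one_mul_left hM, tmul_one_mul_one_tmul]

theorem map_one_tmul_tmul_one_mul
    (hτ_mul : ∀ (b : B) (a a' : A), τ (b ⊗ₜ (a * a')) = M (τ (b ⊗ₜ a)) (a' ⊗ₜ (1 : B)))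
    (b : B) (a : A) (y : A ⊗[R] B) :
    M ((1 : A) ⊗ₜ b) ((a ⊗ₜ 1) * y) = M (τ (b ⊗ₜ a)) y := by
  induction y using TensorProduct.induction_on with
  | zero => simp
  | add y₁ y₂ h₁ h₂ => simp only [mul_add, map_add, h₁, h₂]
  | tmul a₁ b₁ =>
    rw [Algebra.TensorProduct.tmul_mul_tmul, one_mul, hM, hτ_mul,
      ← Algebra.TensorProduct.one_def, one_mul,
      ← map_mul_one_tmul_right hM, tmul_one_mul_one_tmul]

theorem assoc
    (hτ_mul_left : ∀ (b b' : B) (a : A), τ ((b * b') ⊗ₜ a) = M ((1 : A) ⊗ₜ b) (τ (b' ⊗ₜ a)))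
    (hτ_mul_right : ∀ (b : B) (a a' : A), τ (b ⊗ₜ (a * a')) = M (τ (b ⊗ₜ a)) (a' ⊗ₜ (1 : B)))
    (x y z : A ⊗[R] B) : M (M x y) z = M x (M y z) := by
  refine assoc_of_tmul M (fun a a' a'' b b' b'' => ?_) x y z
  calc M (M (a ⊗ₜ b) (a' ⊗ₜ b')) (a'' ⊗ₜ b'')
      = (a ⊗ₜ 1) * M (τ (b ⊗ₜ a') * (1 ⊗ₜ b')) ((a'' ⊗ₜ 1) * (1 ⊗ₜ b'')) := by
        rw [hM, mul_assoc, map_tmul_one_mul_left hM, tmul_one_mul_one_tmul]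
    _ = (a ⊗ₜ 1) * M (τ (b ⊗ₜ a')) (τ (b' ⊗ₜ a'')) * (1 ⊗ₜ b'') := by
        rw [map_mul_one_tmul_right hM, map_mul_one_tmul_tmul_one hM hτ_mul_left, mul_assoc]
    _ = M ((a ⊗ₜ 1) * (1 ⊗ₜ b)) ((a' ⊗ₜ 1) * τ (b' ⊗ₜ a'') * (1 ⊗ₜ b'')) := by
        rw [map_mul_one_tmul_right hM, map_tmul_one_mul_left hM,
          map_one_tmul_tmul_one_mul hM hτ_mul_right, mul_assoc]
    _ = M (a ⊗ₜ b) (M (a' ⊗ₜ b') (a'' ⊗ₜ b'')) := by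
        rw [tmul_one_mul_one_tmul, hM]

theorem one_tmul_one_left (hτ_one : ∀ a : A, τ ((1 : B) ⊗ₜ a) = a ⊗ₜ (1 : B))
    (x : A ⊗[R] B) : M (1 ⊗ₜ 1) x = x := by
  suffices M (1 ⊗ₜ 1) = LinearMap.id from LinearMap.congr_fun this x
  ext a b
  simp [hM, hτ_one]

theorem one_tmul_one_right (hτ_one : ∀ b : B, τ (b ⊗ₜ (1 : A)) = (1 : A) ⊗ₜ b)
    (x : A ⊗[R] B) : M x (1 ⊗ₜ 1) = x := by
  suffices M.flip (1 ⊗ₜ 1) = LinearMap.id from LinearMap.congr_fun this x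
  ext a b
  simp [hM, hτ_one]

end TwistedTensorProduct

/-- Čap–Schichl–Vanžura: if `τ : B⊗A → A⊗B` is a `k`-linear map with `τ(b⊗1) = 1⊗b`,
`τ(1⊗a) = a⊗1` satisfying the associativity constraint
`τ∘(m_B⊗m_A) = m_τ∘(τ⊗τ)∘(id_B⊗τ⊗id_A)` (stated below on simple tensors),
then the twisted tensor product `(A⊗B, m_τ)` with
`m_τ = (m_A⊗m_B)∘(id_A⊗τ⊗id_B)` is an associative unital algebra with unit `1⊗1`.
Here `M` is the bilinear form of `m_τ`; on simple tensors
`M (a⊗b) (a'⊗b') = (a⊗1) · τ(b⊗a') · (1⊗b')` (the products taken in the ordinary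
tensor product algebra `A⊗B`, which agrees with `(m_A⊗m_B)(a ⊗ τ(b⊗a') ⊗ b')`). -/
theorem twisted_tensor_product_is_associative_algebra
    (k A B : Type*) [Field k] [Ring A] [Algebra k A] [Ring B] [Algebra k B]
    (τ : B ⊗[k] A →ₗ[k] A ⊗[k] B)
    (hτB : ∀ b : B, τ (b ⊗ₜ[k] (1 : A)) = (1 : A) ⊗ₜ[k] b)
    (hτA : ∀ a : A, τ ((1 : B) ⊗ₜ[k] a) = a ⊗ₜ[k] (1 : B))
    (M : A ⊗[k] B →ₗ[k] A ⊗[k] B →ₗ[k] A ⊗[k] B)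
    (hM : ∀ (a a' : A) (b b' : B),
      M (a ⊗ₜ[k] b) (a' ⊗ₜ[k] b') =
        (a ⊗ₜ[k] (1 : B)) * τ (b ⊗ₜ[k] a') * ((1 : A) ⊗ₜ[k] b'))
    (hassoc : ∀ (b b' : B) (a a' : A),
      τ ((b * b') ⊗ₜ[k] (a * a')) =
        TensorProduct.lift M (TensorProduct.map τ τ
          ((TensorProduct.assoc k B A (B ⊗[k] A)).symm
            (b ⊗ₜ[k] ((TensorProduct.assoc k A B A) ((τ (b' ⊗ₜ[k] a)) ⊗ₜ[k] a')))))) :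
    (∀ x y z : A ⊗[k] B, M (M x y) z = M x (M y z)) ∧
      (∀ x : A ⊗[k] B, M ((1 : A) ⊗ₜ[k] (1 : B)) x = x ∧
        M x ((1 : A) ⊗ₜ[k] (1 : B)) = x) := by
  have hτ_mul_left (b b' : B) (a : A) : τ ((b * b') ⊗ₜ a) = M (1 ⊗ₜ b) (τ (b' ⊗ₜ a)) := by
    simpa [hτB] using hassoc b b' 1 a
  have hτ_mul_right (b : B) (a a' : A) : τ (b ⊗ₜ (a * a')) = M (τ (b ⊗ₜ a)) (a' ⊗ₜ 1) := by
    simpa [hτA] using hassoc b 1 a a'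
  exact ⟨TwistedTensorProduct.assoc hM hτ_mul_left hτ_mul_right, fun x =>
    ⟨TwistedTensorProduct.one_tmul_one_left hM hτA x,
      TwistedTensorProduct.one_tmul_one_right hM hτB x⟩⟩
end

section
/- Let H be a Hopf algebra, let A and B be H-module algebras, and let τ : B⊗A → A⊗B be a twisting map that is an H-module homomorphism (where H acts diagonally on tensor products). Then the twisted tensor product A⊗^τB, with multiplication m_τ = (m_A⊗m_B)∘(id_A⊗τ⊗id_B) and diagonal H-action, is an H-module algebra. -/
/-!
The Sweedler condition `h·(xy) = ∑ (h₁·x)(h₂·y)` says precisely that the multiplication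
`X ⊗ X → X` is `H`-linear for the diagonal action.
The twisted multiplication is a composite of `m_A ⊗ m_B`, `τ ⊗ id` and associators, all of
which are `H`-linear, so it is `H`-linear too. The diagonal action is unital and multiplicative
because `Δ` is an algebra map, and `h·(1 ⊗ 1) = ε(h)(1 ⊗ 1)` by the counit axiom.
-/

open TensorProduct

section ModuleAlgebra

variable (k : Type*) [Field k] {H : Type*} [Ring H] [Bialgebra k H]

/-- Given an action `act` of a bialgebra `H` on a `k`-module `X` equipped with a
bilinear multiplication `μ` and unit `e`, this says that `X` is an `H`-module algebra:
`1·x = x`, `(hh')·x = h·(h'·x)`, `h·e = ε(h)e`, and the Sweedler condition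
`h·(xy) = ∑ (h₁·x)(h₂·y)` (expressed via `comul`). -/
def IsModuleAlgebraWithMul {X : Type*} [AddCommGroup X] [Module k X]
    (act : H →ₗ[k] X →ₗ[k] X) (μ : X →ₗ[k] X →ₗ[k] X) (e : X) : Prop :=
  (∀ x : X, act 1 x = x) ∧
  (∀ (h h' : H) (x : X), act (h * h') x = act h (act h' x)) ∧
  (∀ h : H, act h e = Coalgebra.counit (R := k) h • e) ∧
  (∀ (h : H) (x y : X),
    act h (μ x y) =
      (TensorProduct.lift ((μ.compl₂ (act.flip y)) ∘ₗ (act.flip x)))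
        (Coalgebra.comul (R := k) h))

/-- The diagonal action `h·(x⊗y) = ∑ (h₁·x)⊗(h₂·y)` of `H` on a tensor product. -/
noncomputable def diagAct {X Y : Type*} [AddCommGroup X] [Module k X]
    [AddCommGroup Y] [Module k Y]
    (actX : H →ₗ[k] X →ₗ[k] X) (actY : H →ₗ[k] Y →ₗ[k] Y) :
    H →ₗ[k] (X ⊗[k] Y) →ₗ[k] (X ⊗[k] Y) :=
  (TensorProduct.homTensorHomMap (RingHom.id k) X Y X Y) ∘ₗ (TensorProduct.map actX actY) ∘ₗ
    Coalgebra.comul (R := k)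

end ModuleAlgebra

section DiagonalAction

variable {k H : Type*} [Field k] [Ring H] [Bialgebra k H]
  {X Y Z X' Y' : Type*} [AddCommGroup X] [Module k X] [AddCommGroup Y] [Module k Y]
  [AddCommGroup Z] [Module k Z] [AddCommGroup X'] [Module k X'] [AddCommGroup Y'] [Module k Y']

theorem diagAct_tmul (actX : H →ₗ[k] X →ₗ[k] X) (actY : H →ₗ[k] Y →ₗ[k] Y)
    (h : H) (x : X) (y : Y) :
    diagAct k actX actY h (x ⊗ₜ y) = map (actX.flip x) (actY.flip y) (Coalgebra.comul h) := by
  simp only [diagAct, LinearMap.comp_apply]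
  induction Coalgebra.comul (R := k) h with
  | zero => simp
  | tmul g g' => simp
  | add u v hu hv => simp only [map_add, LinearMap.add_apply, hu, hv]

theorem flip_diagAct_tmul (actX : H →ₗ[k] X →ₗ[k] X) (actY : H →ₗ[k] Y →ₗ[k] Y)
    (x : X) (y : Y) :
    (diagAct k actX actY).flip (x ⊗ₜ y) = map (actX.flip x) (actY.flip y) ∘ₗ Coalgebra.comul :=
  LinearMap.ext fun h => diagAct_tmul actX actY h x y

theorem diagAct_tmul_of_counit {actX : H →ₗ[k] X →ₗ[k] X} {actY : H →ₗ[k] Y →ₗ[k] Y}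
    {x : X} {y : Y} (hx : ∀ h, actX h x = Coalgebra.counit (R := k) h • x)
    (hy : ∀ h, actY h y = Coalgebra.counit (R := k) h • y) (h : H) :
    diagAct k actX actY h (x ⊗ₜ y) = Coalgebra.counit (R := k) h • (x ⊗ₜ y) := by
  have hx' : actX.flip x = LinearMap.toSpanSingleton k X x ∘ₗ Coalgebra.counit :=
    LinearMap.ext hx
  have hy' : actY.flip y = LinearMap.toSpanSingleton k Y y ∘ₗ Coalgebra.counit :=
    LinearMap.ext hy
  have hcounit : map Coalgebra.counit Coalgebra.counit (Coalgebra.comul h)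
      = (1 : k) ⊗ₜ[k] Coalgebra.counit h := by
    rw [← LinearMap.lTensor_comp_rTensor, LinearMap.comp_apply, Coalgebra.rTensor_counit_comul,
      LinearMap.lTensor_tmul]
  rw [diagAct_tmul, hx', hy', map_comp, LinearMap.comp_apply, hcounit, map_tmul]
  simp [tmul_smul]

def IsEquivariant (actX : H →ₗ[k] X →ₗ[k] X) (actY : H →ₗ[k] Y →ₗ[k] Y) (f : X →ₗ[k] Y) :
    Prop :=
  ∀ (h : H) (x : X), f (actX h x) = actY h (f x)

namespace IsEquivariant

variable {actX : H →ₗ[k] X →ₗ[k] X} {actY : H →ₗ[k] Y →ₗ[k] Y} {actZ : H →ₗ[k] Z →ₗ[k] Z}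
  {actX' : H →ₗ[k] X' →ₗ[k] X'} {actY' : H →ₗ[k] Y' →ₗ[k] Y'}

theorem id (actX : H →ₗ[k] X →ₗ[k] X) : IsEquivariant actX actX LinearMap.id :=
  fun _ _ => rfl

theorem comp {f : X →ₗ[k] Y} {g : Y →ₗ[k] Z} (hg : IsEquivariant actY actZ g)
    (hf : IsEquivariant actX actY f) : IsEquivariant actX actZ (g ∘ₗ f) := fun h x => by
  rw [LinearMap.comp_apply, hf, hg, LinearMap.comp_apply]

theorem symm {e : X ≃ₗ[k] Y} (he : IsEquivariant actX actY e) :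
    IsEquivariant actY actX e.symm := fun h y => by
  simpa using congrArg e.symm (he h (e.symm y)).symm

theorem comp_flip {f : X →ₗ[k] Y} (hf : IsEquivariant actX actY f) (x : X) :
    f ∘ₗ actX.flip x = actY.flip (f x) :=
  LinearMap.ext fun h => hf h x

theorem tensorMap {f : X →ₗ[k] Y} {g : X' →ₗ[k] Y'} (hf : IsEquivariant actX actY f)
    (hg : IsEquivariant actX' actY' g) :
    IsEquivariant (diagAct k actX actX') (diagAct k actY actY') (map f g) := by
  intro h t
  induction t with
  | zero => simp
  | add u v hu hv => simp only [map_add, hu, hv]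
  | tmul x x' =>
    rw [diagAct_tmul, map_tmul, diagAct_tmul, ← LinearMap.comp_apply, ← map_comp,
      hf.comp_flip, hg.comp_flip]

/-- Coassociativity of `H` is what makes the associator of tensor products equivariant. -/
theorem assoc (actX : H →ₗ[k] X →ₗ[k] X) (actY : H →ₗ[k] Y →ₗ[k] Y)
    (actZ : H →ₗ[k] Z →ₗ[k] Z) :
    IsEquivariant (diagAct k (diagAct k actX actY) actZ) (diagAct k actX (diagAct k actY actZ))
      (TensorProduct.assoc k X Y Z) := by
  intro h t
  induction t with
  | zero => simp
  | add u v hu hv => simp only [map_add, hu, hv]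
  | tmul p z =>
    induction p with
    | zero => simp
    | add u v hu hv => simp only [add_tmul, map_add, hu, hv]
    | tmul x y =>
      set fx := actX.flip x
      set fy := actY.flip y
      set fz := actZ.flip z
      have hleft : map (map fx fy ∘ₗ Coalgebra.comul) fz
          = map (map fx fy) fz ∘ₗ (Coalgebra.comul (R := k) (A := H)).rTensor H := by
        rw [LinearMap.rTensor, ← map_comp, LinearMap.comp_id]
      have hright : map fx (map fy fz ∘ₗ Coalgebra.comul)
          = map fx (map fy fz) ∘ₗ (Coalgebra.comul (R := k) (A := H)).lTensor H := by
        rw [LinearMap.lTensor, ← map_comp, LinearMap.comp_id]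
      rw [diagAct_tmul, flip_diagAct_tmul, LinearEquiv.coe_coe, assoc_tmul, diagAct_tmul,
        flip_diagAct_tmul, hleft, hright, LinearMap.comp_apply, LinearMap.comp_apply,
        ← Coalgebra.coassoc_apply, map_map_assoc]

end IsEquivariant

theorem isEquivariant_lift_iff (act : H →ₗ[k] X →ₗ[k] X) (μ : X →ₗ[k] X →ₗ[k] X) :
    IsEquivariant (diagAct k act act) act (lift μ) ↔
      ∀ (h : H) (x y : X),
        act h (μ x y) = lift ((μ.compl₂ (act.flip y)) ∘ₗ act.flip x) (Coalgebra.comul h) := by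
  have hlift : ∀ x y : X, lift ((μ.compl₂ (act.flip y)) ∘ₗ act.flip x)
      = lift μ ∘ₗ map (act.flip x) (act.flip y) :=
    fun x y => ext' fun g g' => by simp
  constructor
  · intro hμ h x y
    rw [hlift, LinearMap.comp_apply, ← diagAct_tmul, hμ, lift.tmul]
  · intro hμ h t
    induction t with
    | zero => simp
    | add u v hu hv => simp only [map_add, hu, hv]
    | tmul x y => rw [lift.tmul, hμ, hlift, LinearMap.comp_apply, ← diagAct_tmul]

end DiagonalAction

section AlgebraAction

variable {k H X Y : Type*} [Field k] [Ring H] [Bialgebra k H]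
  [AddCommGroup X] [Module k X] [AddCommGroup Y] [Module k Y]

theorem diagAct_algHom (ρX : H →ₐ[k] Module.End k X) (ρY : H →ₐ[k] Module.End k Y) :
    diagAct k ρX.toLinearMap ρY.toLinearMap =
      (Module.endTensorEndAlgHom.comp
        ((Algebra.TensorProduct.map ρX ρY).comp (Bialgebra.comulAlgHom k H))).toLinearMap := by
  ext h : 1
  simp only [diagAct, LinearMap.comp_apply, AlgHom.toLinearMap_apply, AlgHom.comp_apply,
    Bialgebra.comulAlgHom_apply]
  induction Coalgebra.comul (R := k) h with
  | zero => simp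
  | tmul g g' => rfl
  | add u v hu hv => simp only [map_add, hu, hv]

theorem diagAct_one_apply (ρX : H →ₐ[k] Module.End k X) (ρY : H →ₐ[k] Module.End k Y)
    (t : X ⊗[k] Y) : diagAct k ρX.toLinearMap ρY.toLinearMap 1 t = t := by
  rw [diagAct_algHom, AlgHom.toLinearMap_apply, map_one, Module.End.one_apply]

theorem diagAct_mul_apply (ρX : H →ₐ[k] Module.End k X) (ρY : H →ₐ[k] Module.End k Y)
    (h h' : H) (t : X ⊗[k] Y) :
    diagAct k ρX.toLinearMap ρY.toLinearMap (h * h') t =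
      diagAct k ρX.toLinearMap ρY.toLinearMap h (diagAct k ρX.toLinearMap ρY.toLinearMap h' t) := by
  simp only [diagAct_algHom, AlgHom.toLinearMap_apply, map_mul, Module.End.mul_apply]

end AlgebraAction

section TwistedTensorProduct

variable {k H X Y : Type*} [Field k] [Ring H] [Bialgebra k H]
  [AddCommGroup X] [Module k X] [AddCommGroup Y] [Module k Y]

/-- The twisted multiplication `(mX ⊗ mY) ∘ (id ⊗ τ ⊗ id)` on `X ⊗ Y`, up to associators. -/
noncomputable def twistedMul (mX : X ⊗[k] X →ₗ[k] X) (mY : Y ⊗[k] Y →ₗ[k] Y)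
    (τ : Y ⊗[k] X →ₗ[k] X ⊗[k] Y) : (X ⊗[k] Y) ⊗[k] (X ⊗[k] Y) →ₗ[k] X ⊗[k] Y :=
  map mX mY ∘ₗ (TensorProduct.assoc k X X (Y ⊗[k] Y)).symm.toLinearMap ∘ₗ
    LinearMap.lTensor X ((TensorProduct.assoc k X Y Y).toLinearMap ∘ₗ LinearMap.rTensor Y τ ∘ₗ
      (TensorProduct.assoc k Y X Y).symm.toLinearMap) ∘ₗ
    (TensorProduct.assoc k X Y (X ⊗[k] Y)).toLinearMap

theorem IsEquivariant.twistedMul {actX : H →ₗ[k] X →ₗ[k] X} {actY : H →ₗ[k] Y →ₗ[k] Y}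
    {mX : X ⊗[k] X →ₗ[k] X} {mY : Y ⊗[k] Y →ₗ[k] Y} {τ : Y ⊗[k] X →ₗ[k] X ⊗[k] Y}
    (hmX : IsEquivariant (diagAct k actX actX) actX mX)
    (hmY : IsEquivariant (diagAct k actY actY) actY mY)
    (hτ : IsEquivariant (diagAct k actY actX) (diagAct k actX actY) τ) :
    IsEquivariant (diagAct k (diagAct k actX actY) (diagAct k actX actY)) (diagAct k actX actY)
      (twistedMul mX mY τ) :=
  (hmX.tensorMap hmY).comp <| (IsEquivariant.assoc _ _ _).symm.comp <|
    ((IsEquivariant.id actX).tensorMap <| (IsEquivariant.assoc _ _ _).comp <|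
      (hτ.tensorMap (IsEquivariant.id actY)).comp (IsEquivariant.assoc _ _ _).symm).comp
    (IsEquivariant.assoc _ _ _)

theorem twistedMul_tmul {A B : Type*} [Ring A] [Algebra k A] [Ring B] [Algebra k B]
    (τ : B ⊗[k] A →ₗ[k] A ⊗[k] B) (a a' : A) (b b' : B) :
    twistedMul (lift (LinearMap.mul k A)) (lift (LinearMap.mul k B)) τ
        ((a ⊗ₜ b) ⊗ₜ (a' ⊗ₜ b')) = (a ⊗ₜ (1 : B)) * τ (b ⊗ₜ a') * ((1 : A) ⊗ₜ b') := by
  simp only [twistedMul, LinearMap.comp_apply, LinearEquiv.coe_coe, assoc_tmul,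
    LinearMap.lTensor_tmul, assoc_symm_tmul, LinearMap.rTensor_tmul]
  induction τ (b ⊗ₜ a') with
  | zero => simp
  | add u v hu hv => simp only [add_tmul, tmul_add, map_add, hu, hv, mul_add, add_mul]
  | tmul a'' b'' => simp [Algebra.TensorProduct.tmul_mul_tmul]

end TwistedTensorProduct

theorem twisted_tensor_product_module_algebra_general
    (k H A B : Type*) [Field k] [Ring H] [Bialgebra k H]
    [Ring A] [Algebra k A] [Ring B] [Algebra k B]
    (actA : H →ₗ[k] A →ₗ[k] A) (actB : H →ₗ[k] B →ₗ[k] B)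
    (hA : IsModuleAlgebraWithMul k actA (LinearMap.mul k A) 1)
    (hB : IsModuleAlgebraWithMul k actB (LinearMap.mul k B) 1)
    (τ : B ⊗[k] A →ₗ[k] A ⊗[k] B)
    (M : A ⊗[k] B →ₗ[k] A ⊗[k] B →ₗ[k] A ⊗[k] B)
    (hM : ∀ (a a' : A) (b b' : B),
      M (a ⊗ₜ[k] b) (a' ⊗ₜ[k] b') =
        (a ⊗ₜ[k] (1 : B)) * τ (b ⊗ₜ[k] a') * ((1 : A) ⊗ₜ[k] b'))
    (hτH : ∀ (h : H) (t : B ⊗[k] A),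
      τ (diagAct k actB actA h t) = diagAct k actA actB h (τ t)) :
    IsModuleAlgebraWithMul k (diagAct k actA actB) M ((1 : A) ⊗ₜ[k] (1 : B)) := by
  let ρA : H →ₐ[k] Module.End k A :=
    .ofLinearMap actA (LinearMap.ext hA.1) fun h h' => LinearMap.ext (hA.2.1 h h')
  let ρB : H →ₐ[k] Module.End k B :=
    .ofLinearMap actB (LinearMap.ext hB.1) fun h h' => LinearMap.ext (hB.2.1 h h')
  have hM_eq : lift M = twistedMul (lift (LinearMap.mul k A)) (lift (LinearMap.mul k B)) τ :=
    ext_fourfold' fun a b a' b' => by rw [lift.tmul, hM, twistedMul_tmul]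
  refine ⟨diagAct_one_apply ρA ρB, diagAct_mul_apply ρA ρB,
    diagAct_tmul_of_counit hA.2.2.1 hB.2.2.1, ?_⟩
  rw [← isEquivariant_lift_iff, hM_eq]
  exact IsEquivariant.twistedMul ((isEquivariant_lift_iff _ _).2 hA.2.2.2)
    ((isEquivariant_lift_iff _ _).2 hB.2.2.2) hτH

/-- Let `H` be a bialgebra (e.g. the underlying bialgebra of a Hopf algebra), let
`A` and `B` be `H`-module algebras, and let `τ : B⊗A → A⊗B` be a twisting map that
is an `H`-module homomorphism for the diagonal actions. Then the twisted tensor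
product `A⊗^τB`, with multiplication `m_τ = (m_A⊗m_B)∘(id_A⊗τ⊗id_B)` (whose bilinear
form `M` satisfies `M (a⊗b) (a'⊗b') = (a⊗1)·τ(b⊗a')·(1⊗b')`) and the diagonal
`H`-action, is an `H`-module algebra. -/
theorem twisted_tensor_product_module_algebra
    (k H A B : Type*) [Field k] [Ring H] [Bialgebra k H]
    [Ring A] [Algebra k A] [Ring B] [Algebra k B]
    (actA : H →ₗ[k] A →ₗ[k] A) (actB : H →ₗ[k] B →ₗ[k] B)
    (hA : IsModuleAlgebraWithMul k actA (LinearMap.mul k A) 1)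
    (hB : IsModuleAlgebraWithMul k actB (LinearMap.mul k B) 1)
    (τ : B ⊗[k] A →ₗ[k] A ⊗[k] B)
    (hτB : ∀ b : B, τ (b ⊗ₜ[k] (1 : A)) = (1 : A) ⊗ₜ[k] b)
    (hτA : ∀ a : A, τ ((1 : B) ⊗ₜ[k] a) = a ⊗ₜ[k] (1 : B))
    (M : A ⊗[k] B →ₗ[k] A ⊗[k] B →ₗ[k] A ⊗[k] B)
    (hM : ∀ (a a' : A) (b b' : B),
      M (a ⊗ₜ[k] b) (a' ⊗ₜ[k] b') =
        (a ⊗ₜ[k] (1 : B)) * τ (b ⊗ₜ[k] a') * ((1 : A) ⊗ₜ[k] b'))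
    (hassoc : ∀ (b b' : B) (a a' : A),
      τ ((b * b') ⊗ₜ[k] (a * a')) =
        TensorProduct.lift M (TensorProduct.map τ τ
          ((TensorProduct.assoc k B A (B ⊗[k] A)).symm
            (b ⊗ₜ[k] ((TensorProduct.assoc k A B A) ((τ (b' ⊗ₜ[k] a)) ⊗ₜ[k] a'))))))
    (hτH : ∀ (h : H) (t : B ⊗[k] A),
      τ (diagAct k actB actA h t) = diagAct k actA actB h (τ t)) :
    IsModuleAlgebraWithMul k (diagAct k actA actB) M ((1 : A) ⊗ₜ[k] (1 : B)) :=
  twisted_tensor_product_module_algebra_general k H A B actA actB hA hB τ M hM hτH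
end

section
/- Let k have characteristic ≠ 2, let V be the kC₂-module with basis u, v where g·u = −u, g·v = −v, and consider the algebra A⊗^c A^op_c generated by u, v, u', v' with relations r₁ = vu − uv + v², r₂ = v'u' − u'v' − v'², r₃ = uu' + u'u, r₄ = vu' + u'v, r₅ = uv' + v'u, r₆ = vv' + v'v, where g·u' = −u', g·v' = −v'. A function κ : span{r₁,…,r₆} → kC₂ with κ(rᵢ) = αᵢ + βᵢg defines, via D = k⟨u,v,u',v'⟩#kC₂/(rᵢ − κ(rᵢ)), a PBW deformation of (A⊗^cA^op_c)#kC₂ if and only if κ(r₁) = λ₁ ∈ k, κ(r₂) = λ₂ ∈ k, κ(r₃) = λ₃g for some λ₁, λ₂, λ₃ ∈ k, and κ(r₄) = κ(r₅) = κ(r₆) = 0. -/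
open FreeAlgebra

/-- The relations of the smash product `k⟨u,v,u',v'⟩ # kC₂` where the generator `g`
of `C₂` (here `G = ι 4`) negates each of `u = ι 0`, `v = ι 1`, `u' = ι 2`, `v' = ι 3`:
`G² = 1` and `Gx = −xG` for each generator `x`. -/
inductive SmashRelC2 (k : Type*) [Field k] :
    FreeAlgebra k (Fin 5) → FreeAlgebra k (Fin 5) → Prop
  | gg : SmashRelC2 k (ι k 4 * ι k 4) 1
  | gu : SmashRelC2 k (ι k 4 * ι k 0) (-(ι k 0 * ι k 4))
  | gv : SmashRelC2 k (ι k 4 * ι k 1) (-(ι k 1 * ι k 4))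
  | gu' : SmashRelC2 k (ι k 4 * ι k 2) (-(ι k 2 * ι k 4))
  | gv' : SmashRelC2 k (ι k 4 * ι k 3) (-(ι k 3 * ι k 4))

private def repFun {k : Type*} [Field k] (a b : Fin 4 → k) : Fin 5 → Matrix (Fin 2) (Fin 2) k :=
  ![!![0, a 0; b 0, 0], !![0, a 1; b 1, 0], !![0, a 2; b 2, 0], !![0, a 3; b 3, 0],
    !![1, 0; 0, -1]]

private def rep {k : Type*} [Field k] (a b : Fin 4 → k) :
    FreeAlgebra k (Fin 5) →ₐ[k] Matrix (Fin 2) (Fin 2) k :=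
  FreeAlgebra.lift k (repFun a b)

private lemma rep_rel {k : Type*} [Field k] (a b : Fin 4 → k) {x y}
    (h : SmashRelC2 k x y) : rep a b x = rep a b y := by
  induction h <;>
    · simp only [rep, map_mul, map_neg, lift_ι_apply, repFun]
      ext i j
      fin_cases i <;> fin_cases j <;>
        simp [Matrix.mul_apply, Fin.sum_univ_two]

private def ψ {k : Type*} [Field k] (a b : Fin 4 → k) :
    RingQuot (SmashRelC2 k) →ₐ[k] Matrix (Fin 2) (Fin 2) k :=
  RingQuot.liftAlgHom k ⟨rep a b, fun _ _ h => rep_rel a b h⟩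

private lemma ψ_π {k : Type*} [Field k] (a b : Fin 4 → k) (x : FreeAlgebra k (Fin 5)) :
    ψ a b (RingQuot.mkAlgHom k (SmashRelC2 k) x) = rep a b x :=
  RingQuot.liftAlgHom_mkAlgHom_apply _ _ _ _

private lemma half_cancel {k : Type*} [Field k] (hk : (2:k) ≠ 0) {x : k}
    (h : (2:k) * x = 0) : x = 0 := by
  rcases mul_eq_zero.mp h with h | h
  · exact absurd h hk
  · exact h

private lemma quarter_cancel {k : Type*} [Field k] (hk : (2:k) ≠ 0) {x : k}
    (h : (2:k) * ((2:k) * x) = 0) : x = 0 :=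
  half_cancel hk (half_cancel hk h)

set_option maxHeartbeats 1600000 in
/-- Jordan plane example (`A = k_J[u,v]`, nontrivial braiding of `kC₂`-modules):
`char k ≠ 2`, the braided product `A ⊗^c A^op_c` has relations `r₁ = vu − uv + v²`,
`r₂ = v'u' − u'v' − v'²`, `r₃ = uu' + u'u`, `r₄ = vu' + u'v`, `r₅ = uv' + v'u`,
`r₆ = vv' + v'v`. A map `κ(rᵢ) = αᵢ + βᵢg` with values in `kC₂` defines (via
`D = k⟨u,v,u',v'⟩#kC₂/(rᵢ − κ(rᵢ))`) a PBW deformation of `(A⊗^cA^op_c)#kC₂` — by the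
Walton–Witherspoon criterion (`κ = κ^C`), equivalent to the `kC₂`-invariance of `κ`
(automatic here) together with the four overlap equations below, computed in the
smash product `k⟨u,v,u',v'⟩#kC₂` — if and only if `κ(r₁) = λ₁`, `κ(r₂) = λ₂`,
`κ(r₃) = λ₃g` for some `λ₁, λ₂, λ₃ ∈ k`, and `κ(r₄) = κ(r₅) = κ(r₆) = 0`. -/
theorem jordan_plane_pbw_deformation_classification (k : Type*) [Field k]
    (hk : (2 : k) ≠ 0) (α β : Fin 6 → k) :
    let π := RingQuot.mkAlgHom k (SmashRelC2 k)
    let u := π (ι k 0)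
    let v := π (ι k 1)
    let u' := π (ι k 2)
    let v' := π (ι k 3)
    let G := π (ι k 4)
    let κ : Fin 6 → RingQuot (SmashRelC2 k) := fun i => α i • 1 + β i • G
    ((κ 0 * u' - κ 2 * v + κ 3 * u + κ 3 * v =
        u' * κ 0 + v * κ 2 - u * κ 3 + v * κ 3) ∧
     (κ 0 * v' - κ 4 * v + κ 5 * u + κ 5 * v =
        v' * κ 0 + v * κ 4 - u * κ 5 + v * κ 5) ∧
     (κ 1 * u - κ 2 * v' + κ 4 * u' - κ 4 * v' =
        u * κ 1 + v' * κ 2 - u' * κ 4 - v' * κ 4) ∧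
     (κ 1 * v - κ 3 * v' + κ 5 * u' - κ 5 * v' =
        v * κ 1 + v' * κ 3 - u' * κ 5 - v' * κ 5)) ↔
    (∃ l₁ l₂ l₃ : k, κ 0 = l₁ • 1 ∧ κ 1 = l₂ • 1 ∧ κ 2 = l₃ • G ∧
      κ 3 = 0 ∧ κ 4 = 0 ∧ κ 5 = 0) := by
  intro π u v u' v' G κ
  have hgu : G * u = -(u * G) := by
    have := RingQuot.mkAlgHom_rel k (SmashRelC2.gu (k := k))
    simpa [map_mul, map_neg] using this
  have hgv : G * v = -(v * G) := by
    have := RingQuot.mkAlgHom_rel k (SmashRelC2.gv (k := k))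
    simpa [map_mul, map_neg] using this
  have hgu' : G * u' = -(u' * G) := by
    have := RingQuot.mkAlgHom_rel k (SmashRelC2.gu' (k := k))
    simpa [map_mul, map_neg] using this
  have hgv' : G * v' = -(v' * G) := by
    have := RingQuot.mkAlgHom_rel k (SmashRelC2.gv' (k := k))
    simpa [map_mul, map_neg] using this
  constructor
  · rintro ⟨e1, e2, e3, e4⟩
    simp only [κ, u, v, u', v', G, π] at e1 e2 e3 e4
    have E1 := fun (a b : Fin 4 → k) (i j : Fin 2) => congrArg (fun M => ψ a b M i j) e1
    have E2 := fun (a b : Fin 4 → k) (i j : Fin 2) => congrArg (fun M => ψ a b M i j) e2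
    have E3 := fun (a b : Fin 4 → k) (i j : Fin 2) => congrArg (fun M => ψ a b M i j) e3
    simp only [map_add, map_sub, map_mul, map_smul, map_one, ψ_π, rep, lift_ι_apply,
      repFun] at E1 E2 E3
    -- from e1 with a-indicator at u' (index 2): β 0 = 0
    have hβ0 : β 0 = 0 := by
      have h := E1 ![0,0,1,0] 0 0 1
      simp [Matrix.mul_apply, Fin.sum_univ_two, Matrix.vecMul, dotProduct,
        Matrix.one_apply] at h
      exact half_cancel hk (by linear_combination h)
    -- from e1 with a-indicator at u (index 0): α 3 = 0
    have hα3 : α 3 = 0 := by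
      have h := E1 ![1,0,0,0] 0 0 1
      simp [Matrix.mul_apply, Fin.sum_univ_two, Matrix.vecMul, dotProduct,
        Matrix.one_apply] at h
      exact half_cancel hk (by linear_combination h)
    -- from e1 with a- and b-indicators at v (index 1): α 2 = 0, β 3 = 0
    have hv1 := E1 ![0,1,0,0] 0 0 1
    have hv2 := E1 0 ![0,1,0,0] 1 0
    simp [Matrix.mul_apply, Fin.sum_univ_two, Matrix.vecMul, dotProduct,
      Matrix.one_apply] at hv1 hv2
    have hα2 : α 2 = 0 := quarter_cancel hk (by linear_combination -(hv1 + hv2))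
    have hβ3 : β 3 = 0 := quarter_cancel hk (by linear_combination hv1 - hv2)
    -- from e2 with a-indicator at u (index 0): α 5 = 0
    have hα5 : α 5 = 0 := by
      have h := E2 ![1,0,0,0] 0 0 1
      simp [Matrix.mul_apply, Fin.sum_univ_two, Matrix.vecMul, dotProduct,
        Matrix.one_apply] at h
      exact half_cancel hk (by linear_combination h)
    -- from e2 with a- and b-indicators at v (index 1): α 4 = 0, β 5 = 0
    have hw1 := E2 ![0,1,0,0] 0 0 1
    have hw2 := E2 0 ![0,1,0,0] 1 0
    simp [Matrix.mul_apply, Fin.sum_univ_two, Matrix.vecMul, dotProduct,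
      Matrix.one_apply] at hw1 hw2
    have hα4 : α 4 = 0 := quarter_cancel hk (by linear_combination -(hw1 + hw2))
    have hβ5 : β 5 = 0 := quarter_cancel hk (by linear_combination hw1 - hw2)
    -- from e3 with a-indicator at u (index 0): β 1 = 0
    have hβ1 : β 1 = 0 := by
      have h := E3 ![1,0,0,0] 0 0 1
      simp [Matrix.mul_apply, Fin.sum_univ_two, Matrix.vecMul, dotProduct,
        Matrix.one_apply] at h
      exact half_cancel hk (by linear_combination h)
    -- from e3 with a- and b-indicators at v' (index 3): β 4 = 0
    have hx1 := E3 ![0,0,0,1] 0 0 1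
    have hx2 := E3 0 ![0,0,0,1] 1 0
    simp [Matrix.mul_apply, Fin.sum_univ_two, Matrix.vecMul, dotProduct,
      Matrix.one_apply] at hx1 hx2
    have hβ4 : β 4 = 0 := quarter_cancel hk (by linear_combination hx2 - hx1)
    refine ⟨α 0, α 1, β 2, ?_, ?_, ?_, ?_, ?_, ?_⟩ <;>
      simp [κ, hβ0, hβ1, hα2, hα3, hβ3, hα4, hβ4, hα5, hβ5]
  · rintro ⟨l₁, l₂, l₃, h0, h1, h2, h3, h4, h5⟩
    refine ⟨?_, ?_, ?_, ?_⟩ <;>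
      · show _ = _
        simp only [h0, h1, h2, h3, h4, h5]
        simp [smul_mul_assoc, mul_smul_comm, hgu, hgv, hgu', hgv']
end

section
/- Let k be a field with char(k) ≠ 2, V the kC₂-module with basis u, v (g acting by −1 on each), and A⊗^cA^op_c the algebra on generators u, v, u', v' with relations of the Jordan plane example (r₁ = vu − uv + v², r₂ = v'u' − u'v' − v'², r₃ = uu' + u'u, r₄ = vu' + u'v, r₅ = uv' + v'u, r₆ = vv' + v'v). Then in the free algebra k⟨u,v,u',v'⟩ the following four elements lie in (I⊗W)∩(W⊗I) and are linearly independent, hence form a basis: r₁u' − r₃v + r₄u + r₄v = u'r₁ + vr₃ − ur₄ + vr₄; r₁v' − r₅v + r₆u + r₆v = v'r₁ + vr₅ − ur₆ + vr₆; r₂u − r₃v' + r₅u' − r₅v' = ur₂ + v'r₃ − u'r₅ − v'r₅; r₂v − r₄v' + r₆u' − r₆v' = vr₂ + v'r₄ − u'r₆ − v'r₆. -/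
set_option maxHeartbeats 4000000


open TensorProduct

/-- Jordan-plane example over `kC₂` (`char k ≠ 2`): with `W` spanned by the basis
`u, v, u', v'` and `I ⊆ W⊗W` spanned by the six relations
`r₁ = vu − uv + v²`, `r₂ = v'u' − u'v' − v'²`, `r₃ = uu' + u'u`, `r₄ = vu' + u'v`,
`r₅ = uv' + v'u`, `r₆ = vv' + v'v` of `A ⊗^c A^op_c`, the four elements
`r₁u' − r₃v + r₄u + r₄v = u'r₁ + vr₃ − ur₄ + vr₄`,
`r₁v' − r₅v + r₆u + r₆v = v'r₁ + vr₅ − ur₆ + vr₆`,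
`r₂u − r₃v' + r₅u' − r₅v' = ur₂ + v'r₃ − u'r₅ − v'r₅`,
`r₂v − r₄v' + r₆u' − r₆v' = vr₂ + v'r₄ − u'r₆ − v'r₆`
lie in `(I⊗W) ∩ (W⊗I)` and are linearly independent, hence form a basis of the
intersection. -/
theorem jordan_plane_intersection_basis (k W : Type*) [Field k] (hk : (2 : k) ≠ 0)
    [AddCommGroup W] [Module k W] (b : Module.Basis (Fin 4) k W) :
    let u := b 0
    let v := b 1
    let u' := b 2
    let v' := b 3
    let r₁ : W ⊗[k] W := v ⊗ₜ u - u ⊗ₜ v + v ⊗ₜ v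
    let r₂ : W ⊗[k] W := v' ⊗ₜ u' - u' ⊗ₜ v' - v' ⊗ₜ v'
    let r₃ : W ⊗[k] W := u ⊗ₜ u' + u' ⊗ₜ u
    let r₄ : W ⊗[k] W := v ⊗ₜ u' + u' ⊗ₜ v
    let r₅ : W ⊗[k] W := u ⊗ₜ v' + v' ⊗ₜ u
    let r₆ : W ⊗[k] W := v ⊗ₜ v' + v' ⊗ₜ v
    let I : Submodule k (W ⊗[k] W) := Submodule.span k {r₁, r₂, r₃, r₄, r₅, r₆}
    let IW : Submodule k ((W ⊗[k] W) ⊗[k] W) :=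
      LinearMap.range (TensorProduct.map I.subtype (LinearMap.id (M := W)))
    let WI : Submodule k ((W ⊗[k] W) ⊗[k] W) :=
      LinearMap.range ((TensorProduct.assoc k W W W).symm.toLinearMap ∘ₗ
        TensorProduct.map (LinearMap.id (M := W)) I.subtype)
    let s₁ := r₁ ⊗ₜ[k] u' - r₃ ⊗ₜ[k] v + r₄ ⊗ₜ[k] u + r₄ ⊗ₜ[k] v
    let s₂ := r₁ ⊗ₜ[k] v' - r₅ ⊗ₜ[k] v + r₆ ⊗ₜ[k] u + r₆ ⊗ₜ[k] v
    let s₃ := r₂ ⊗ₜ[k] u - r₃ ⊗ₜ[k] v' + r₅ ⊗ₜ[k] u' - r₅ ⊗ₜ[k] v'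
    let s₄ := r₂ ⊗ₜ[k] v - r₄ ⊗ₜ[k] v' + r₆ ⊗ₜ[k] u' - r₆ ⊗ₜ[k] v'
    ((TensorProduct.assoc k W W W) s₁ =
        u' ⊗ₜ r₁ + v ⊗ₜ r₃ - u ⊗ₜ r₄ + v ⊗ₜ r₄) ∧
    ((TensorProduct.assoc k W W W) s₂ =
        v' ⊗ₜ r₁ + v ⊗ₜ r₅ - u ⊗ₜ r₆ + v ⊗ₜ r₆) ∧
    ((TensorProduct.assoc k W W W) s₃ =
        u ⊗ₜ r₂ + v' ⊗ₜ r₃ - u' ⊗ₜ r₅ - v' ⊗ₜ r₅) ∧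
    ((TensorProduct.assoc k W W W) s₄ =
        v ⊗ₜ r₂ + v' ⊗ₜ r₄ - u' ⊗ₜ r₆ - v' ⊗ₜ r₆) ∧
    (s₁ ∈ IW ⊓ WI ∧ s₂ ∈ IW ⊓ WI ∧ s₃ ∈ IW ⊓ WI ∧ s₄ ∈ IW ⊓ WI) ∧
    LinearIndependent k ![s₁, s₂, s₃, s₄] ∧
    Submodule.span k {s₁, s₂, s₃, s₄} = IW ⊓ WI := by
  intro u v u' v' r₁ r₂ r₃ r₄ r₅ r₆ I IW WI s₁ s₂ s₃ s₄
  have h1 : r₁ ∈ I := by simp only [I]; exact Submodule.subset_span (by simp)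
  have h2 : r₂ ∈ I := by simp only [I]; exact Submodule.subset_span (by simp)
  have h3 : r₃ ∈ I := by simp only [I]; exact Submodule.subset_span (by simp)
  have h4 : r₄ ∈ I := by simp only [I]; exact Submodule.subset_span (by simp)
  have h5 : r₅ ∈ I := by simp only [I]; exact Submodule.subset_span (by simp)
  have h6 : r₆ ∈ I := by simp only [I]; exact Submodule.subset_span (by simp)
  have e1 : (TensorProduct.assoc k W W W) s₁ =
      u' ⊗ₜ r₁ + v ⊗ₜ r₃ - u ⊗ₜ r₄ + v ⊗ₜ r₄ := by
    simp only [s₁, r₁, r₃, r₄]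
    simp only [sub_tmul, add_tmul, tmul_sub, tmul_add, assoc_tmul, map_add, map_sub]
    module
  have e2 : (TensorProduct.assoc k W W W) s₂ =
      v' ⊗ₜ r₁ + v ⊗ₜ r₅ - u ⊗ₜ r₆ + v ⊗ₜ r₆ := by
    simp only [s₂, r₁, r₅, r₆]
    simp only [sub_tmul, add_tmul, tmul_sub, tmul_add, assoc_tmul, map_add, map_sub]
    module
  have e3 : (TensorProduct.assoc k W W W) s₃ =
      u ⊗ₜ r₂ + v' ⊗ₜ r₃ - u' ⊗ₜ r₅ - v' ⊗ₜ r₅ := by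
    simp only [s₃, r₂, r₃, r₅]
    simp only [sub_tmul, add_tmul, tmul_sub, tmul_add, assoc_tmul, map_add, map_sub]
    module
  have e4 : (TensorProduct.assoc k W W W) s₄ =
      v ⊗ₜ r₂ + v' ⊗ₜ r₄ - u' ⊗ₜ r₆ - v' ⊗ₜ r₆ := by
    simp only [s₄, r₂, r₄, r₆]
    simp only [sub_tmul, add_tmul, tmul_sub, tmul_add, assoc_tmul, map_add, map_sub]
    module
  have m1I : s₁ ∈ IW := by
    refine ⟨(⟨r₁, h1⟩ : I) ⊗ₜ u' - (⟨r₃, h3⟩ : I) ⊗ₜ v + (⟨r₄, h4⟩ : I) ⊗ₜ u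
      + (⟨r₄, h4⟩ : I) ⊗ₜ v, ?_⟩
    simp only [map_sub, map_add, map_tmul, Submodule.coe_subtype, LinearMap.id_coe, id_eq, s₁]
  have m2I : s₂ ∈ IW := by
    refine ⟨(⟨r₁, h1⟩ : I) ⊗ₜ v' - (⟨r₅, h5⟩ : I) ⊗ₜ v + (⟨r₆, h6⟩ : I) ⊗ₜ u
      + (⟨r₆, h6⟩ : I) ⊗ₜ v, ?_⟩
    simp only [map_sub, map_add, map_tmul, Submodule.coe_subtype, LinearMap.id_coe, id_eq, s₂]
  have m3I : s₃ ∈ IW := by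
    refine ⟨(⟨r₂, h2⟩ : I) ⊗ₜ u - (⟨r₃, h3⟩ : I) ⊗ₜ v' + (⟨r₅, h5⟩ : I) ⊗ₜ u'
      - (⟨r₅, h5⟩ : I) ⊗ₜ v', ?_⟩
    simp only [map_sub, map_add, map_tmul, Submodule.coe_subtype, LinearMap.id_coe, id_eq, s₃]
  have m4I : s₄ ∈ IW := by
    refine ⟨(⟨r₂, h2⟩ : I) ⊗ₜ v - (⟨r₄, h4⟩ : I) ⊗ₜ v' + (⟨r₆, h6⟩ : I) ⊗ₜ u'
      - (⟨r₆, h6⟩ : I) ⊗ₜ v', ?_⟩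
    simp only [map_sub, map_add, map_tmul, Submodule.coe_subtype, LinearMap.id_coe, id_eq, s₄]
  have mW : ∀ (t : (W ⊗[k] W) ⊗[k] W) (y : W ⊗[k] I),
      TensorProduct.map (LinearMap.id (M := W)) I.subtype y = (TensorProduct.assoc k W W W) t →
      t ∈ WI := by
    intro t y hy
    refine ⟨y, ?_⟩
    simp only [LinearMap.coe_comp, LinearEquiv.coe_coe, Function.comp_apply, hy,
      LinearEquiv.symm_apply_apply]
  have m1W : s₁ ∈ WI := by
    refine mW s₁ (u' ⊗ₜ (⟨r₁, h1⟩ : I) + v ⊗ₜ (⟨r₃, h3⟩ : I) - u ⊗ₜ (⟨r₄, h4⟩ : I)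
      + v ⊗ₜ (⟨r₄, h4⟩ : I)) ?_
    rw [e1]
    simp only [map_sub, map_add, map_tmul, Submodule.coe_subtype, LinearMap.id_coe, id_eq]
  have m2W : s₂ ∈ WI := by
    refine mW s₂ (v' ⊗ₜ (⟨r₁, h1⟩ : I) + v ⊗ₜ (⟨r₅, h5⟩ : I) - u ⊗ₜ (⟨r₆, h6⟩ : I)
      + v ⊗ₜ (⟨r₆, h6⟩ : I)) ?_
    rw [e2]
    simp only [map_sub, map_add, map_tmul, Submodule.coe_subtype, LinearMap.id_coe, id_eq]
  have m3W : s₃ ∈ WI := by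
    refine mW s₃ (u ⊗ₜ (⟨r₂, h2⟩ : I) + v' ⊗ₜ (⟨r₃, h3⟩ : I) - u' ⊗ₜ (⟨r₅, h5⟩ : I)
      - v' ⊗ₜ (⟨r₅, h5⟩ : I)) ?_
    rw [e3]
    simp only [map_sub, map_add, map_tmul, Submodule.coe_subtype, LinearMap.id_coe, id_eq]
  have m4W : s₄ ∈ WI := by
    refine mW s₄ (v ⊗ₜ (⟨r₂, h2⟩ : I) + v' ⊗ₜ (⟨r₄, h4⟩ : I) - u' ⊗ₜ (⟨r₆, h6⟩ : I)
      - v' ⊗ₜ (⟨r₆, h6⟩ : I)) ?_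
    rw [e4]
    simp only [map_sub, map_add, map_tmul, Submodule.coe_subtype, LinearMap.id_coe, id_eq]
  have lind : LinearIndependent k ![s₁, s₂, s₃, s₄] := by
    rw [Fintype.linearIndependent_iff]
    intro g hg
    simp only [Fin.sum_univ_four, Matrix.cons_val_zero, Matrix.cons_val_one, Matrix.head_cons,
      Matrix.cons_val_two, Matrix.tail_cons, Matrix.cons_val_three] at hg
    simp only [s₁, s₂, s₃, s₄, r₁, r₂, r₃, r₄, r₅, r₆, u, v, u', v'] at hg
    simp only [sub_tmul, add_tmul, tmul_sub, tmul_add, smul_sub, smul_add] at hg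
    have c1 := congrArg (fun z => ((Module.Basis.tensorProduct (Module.Basis.tensorProduct b b) b).repr z)
      (((1 : Fin 4), (0 : Fin 4)), (2 : Fin 4))) hg
    have c2 := congrArg (fun z => ((Module.Basis.tensorProduct (Module.Basis.tensorProduct b b) b).repr z)
      (((1 : Fin 4), (0 : Fin 4)), (3 : Fin 4))) hg
    have c3 := congrArg (fun z => ((Module.Basis.tensorProduct (Module.Basis.tensorProduct b b) b).repr z)
      (((3 : Fin 4), (2 : Fin 4)), (0 : Fin 4))) hg
    have c4 := congrArg (fun z => ((Module.Basis.tensorProduct (Module.Basis.tensorProduct b b) b).repr z)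
      (((3 : Fin 4), (2 : Fin 4)), (1 : Fin 4))) hg
    simp only [map_add, map_sub, map_smul, map_zero, Finsupp.add_apply, Finsupp.sub_apply,
      Finsupp.smul_apply, Finsupp.coe_zero, Pi.zero_apply,
      Module.Basis.tensorProduct_repr_tmul_apply, Module.Basis.repr_self,
      Finsupp.single_apply, smul_eq_mul] at c1 c2 c3 c4
    simp only [Fin.isValue, Fin.reduceEq, if_true, if_false, reduceIte] at c1 c2 c3 c4
    norm_num at c1 c2 c3 c4
    intro i
    fin_cases i
    · exact c1
    · exact c2
    · exact c3
    · exact c4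
  refine ⟨e1, e2, e3, e4, ⟨⟨m1I, m1W⟩, ⟨m2I, m2W⟩, ⟨m3I, m3W⟩, ⟨m4I, m4W⟩⟩, lind, ?_⟩
  refine le_antisymm (Submodule.span_le.mpr ?_) ?_
  · rintro z hz
    simp only [Set.mem_insert_iff, Set.mem_singleton_iff] at hz
    rcases hz with h|h|h|h <;> subst h
    · exact ⟨m1I, m1W⟩
    · exact ⟨m2I, m2W⟩
    · exact ⟨m3I, m3W⟩
    · exact ⟨m4I, m4W⟩
  · rintro x ⟨hxIW, hxWI⟩
    have hR0 : (![r₁, r₂, r₃, r₄, r₅, r₆] : Fin 6 → W ⊗[k] W) 0 = r₁ := rfl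
    have hR1 : (![r₁, r₂, r₃, r₄, r₅, r₆] : Fin 6 → W ⊗[k] W) 1 = r₂ := rfl
    have hR2 : (![r₁, r₂, r₃, r₄, r₅, r₆] : Fin 6 → W ⊗[k] W) 2 = r₃ := rfl
    have hR3 : (![r₁, r₂, r₃, r₄, r₅, r₆] : Fin 6 → W ⊗[k] W) 3 = r₄ := rfl
    have hR4 : (![r₁, r₂, r₃, r₄, r₅, r₆] : Fin 6 → W ⊗[k] W) 4 = r₅ := rfl
    have hR5 : (![r₁, r₂, r₃, r₄, r₅, r₆] : Fin 6 → W ⊗[k] W) 5 = r₆ := rfl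
    have hgenI : ∀ (i : Fin 6) (w : W), (![r₁, r₂, r₃, r₄, r₅, r₆] i) ⊗ₜ[k] w ∈
        Submodule.span k (Set.range fun p : Fin 6 × Fin 4 =>
          ![r₁, r₂, r₃, r₄, r₅, r₆] p.1 ⊗ₜ[k] b p.2) := by
      intro i w
      have hw : w = ∑ j, b.repr w j • b j := (Module.Basis.sum_repr b w).symm
      rw [hw, tmul_sum]
      simp_rw [tmul_smul]
      exact Submodule.sum_mem _ fun j _ =>
        Submodule.smul_mem _ _ (Submodule.subset_span ⟨(i, j), rfl⟩)
    have hxI : ∀ z ∈ IW, z ∈ Submodule.span k (Set.range fun p : Fin 6 × Fin 4 =>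
        ![r₁, r₂, r₃, r₄, r₅, r₆] p.1 ⊗ₜ[k] b p.2) := by
      rintro z ⟨y, rfl⟩
      induction y using TensorProduct.induction_on with
      | zero => simp
      | tmul q w =>
        obtain ⟨q, hq⟩ := q
        simp only [map_tmul, Submodule.coe_subtype, LinearMap.id_coe, id_eq]
        simp only [I] at hq
        refine Submodule.span_induction (p := fun z _ => z ⊗ₜ[k] w ∈ _) ?_ ?_ ?_ ?_ hq
        · intro z hz
          simp only [Set.mem_insert_iff, Set.mem_singleton_iff] at hz
          rcases hz with h|h|h|h|h|h <;> subst h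
          · exact hgenI 0 w
          · exact hgenI 1 w
          · exact hgenI 2 w
          · exact hgenI 3 w
          · exact hgenI 4 w
          · exact hgenI 5 w
        · simp only [zero_tmul]; exact Submodule.zero_mem _
        · intro x y _ _ hx hy; rw [add_tmul]; exact Submodule.add_mem _ hx hy
        · intro c x _ hx; rw [← smul_tmul']; exact Submodule.smul_mem _ _ hx
      | add x y hx hy => rw [map_add]; exact Submodule.add_mem _ hx hy
    have hgenW : ∀ (w : W) (j : Fin 6),
        (TensorProduct.assoc k W W W).symm (w ⊗ₜ[k] ![r₁, r₂, r₃, r₄, r₅, r₆] j) ∈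
        Submodule.span k (Set.range fun p : Fin 4 × Fin 6 =>
          (TensorProduct.assoc k W W W).symm (b p.1 ⊗ₜ[k] ![r₁, r₂, r₃, r₄, r₅, r₆] p.2)) := by
      intro w j
      have hw : w = ∑ i, b.repr w i • b i := (Module.Basis.sum_repr b w).symm
      rw [hw, sum_tmul]
      simp_rw [← smul_tmul', map_sum, map_smul]
      exact Submodule.sum_mem _ fun i _ =>
        Submodule.smul_mem _ _ (Submodule.subset_span ⟨(i, j), rfl⟩)
    have hxW : ∀ z ∈ WI, z ∈ Submodule.span k (Set.range fun p : Fin 4 × Fin 6 =>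
        (TensorProduct.assoc k W W W).symm (b p.1 ⊗ₜ[k] ![r₁, r₂, r₃, r₄, r₅, r₆] p.2)) := by
      rintro z ⟨y, rfl⟩
      simp only [LinearMap.coe_comp, LinearEquiv.coe_coe, Function.comp_apply]
      induction y using TensorProduct.induction_on with
      | zero => simp
      | tmul w q =>
        obtain ⟨q, hq⟩ := q
        simp only [map_tmul, Submodule.coe_subtype, LinearMap.id_coe, id_eq]
        simp only [I] at hq
        refine Submodule.span_induction
          (p := fun q _ => (TensorProduct.assoc k W W W).symm (w ⊗ₜ[k] q) ∈ _) ?_ ?_ ?_ ?_ hq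
        · intro z hz
          simp only [Set.mem_insert_iff, Set.mem_singleton_iff] at hz
          rcases hz with h|h|h|h|h|h <;> subst h
          · exact hgenW w 0
          · exact hgenW w 1
          · exact hgenW w 2
          · exact hgenW w 3
          · exact hgenW w 4
          · exact hgenW w 5
        · simp only [tmul_zero, map_zero]; exact Submodule.zero_mem _
        · intro x y _ _ hx hy; rw [tmul_add, map_add]; exact Submodule.add_mem _ hx hy
        · intro c x _ hx; rw [tmul_smul, map_smul]; exact Submodule.smul_mem _ _ hx
      | add x y hx hy => rw [map_add, map_add]; exact Submodule.add_mem _ hx hy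
    obtain ⟨a, hax⟩ := (Submodule.mem_span_range_iff_exists_fun k).mp (hxI x hxIW)
    obtain ⟨c, hcx⟩ := (Submodule.mem_span_range_iff_exists_fun k).mp (hxW x hxWI)
    have h : ∑ p : Fin 6 × Fin 4, a p • (![r₁, r₂, r₃, r₄, r₅, r₆] p.1 ⊗ₜ[k] b p.2) =
        ∑ p : Fin 4 × Fin 6, c p •
          (TensorProduct.assoc k W W W).symm (b p.1 ⊗ₜ[k] ![r₁, r₂, r₃, r₄, r₅, r₆] p.2) :=
      hax.trans hcx.symm
    simp only [Fintype.sum_prod_type, Fin.sum_univ_six, Fin.sum_univ_four,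
      hR0, hR1, hR2, hR3, hR4, hR5] at h
    simp only [r₁, r₂, r₃, r₄, r₅, r₆, u, v, u', v'] at h
    simp only [sub_tmul, add_tmul, tmul_sub, tmul_add, map_sub, map_add, assoc_symm_tmul,
      smul_sub, smul_add] at h
    simp only [← Module.Basis.tensorProduct_apply] at h
    have hrep := congrArg (fun z => (Module.Basis.tensorProduct (Module.Basis.tensorProduct b b) b).repr z) h
    simp only [map_add, map_sub, map_smul, Module.Basis.repr_self] at hrep
    have E001 := congrArg (fun F => F (((0 : Fin 4), (0 : Fin 4)), (1 : Fin 4))) hrep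
    simp only [Finsupp.add_apply, Finsupp.sub_apply, Finsupp.smul_apply, Finsupp.single_apply,
      Prod.mk.injEq, Fin.reduceEq, and_true, and_false, true_and, false_and, if_true, if_false,
      reduceIte, smul_eq_mul, mul_one, mul_zero, add_zero, zero_add, sub_zero, zero_sub,
      neg_zero, neg_neg, Fin.isValue] at E001
    have E002 := congrArg (fun F => F (((0 : Fin 4), (0 : Fin 4)), (2 : Fin 4))) hrep
    simp only [Finsupp.add_apply, Finsupp.sub_apply, Finsupp.smul_apply, Finsupp.single_apply,
      Prod.mk.injEq, Fin.reduceEq, and_true, and_false, true_and, false_and, if_true, if_false,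
      reduceIte, smul_eq_mul, mul_one, mul_zero, add_zero, zero_add, sub_zero, zero_sub,
      neg_zero, neg_neg, Fin.isValue] at E002
    have E003 := congrArg (fun F => F (((0 : Fin 4), (0 : Fin 4)), (3 : Fin 4))) hrep
    simp only [Finsupp.add_apply, Finsupp.sub_apply, Finsupp.smul_apply, Finsupp.single_apply,
      Prod.mk.injEq, Fin.reduceEq, and_true, and_false, true_and, false_and, if_true, if_false,
      reduceIte, smul_eq_mul, mul_one, mul_zero, add_zero, zero_add, sub_zero, zero_sub,
      neg_zero, neg_neg, Fin.isValue] at E003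
    have E010 := congrArg (fun F => F (((0 : Fin 4), (1 : Fin 4)), (0 : Fin 4))) hrep
    simp only [Finsupp.add_apply, Finsupp.sub_apply, Finsupp.smul_apply, Finsupp.single_apply,
      Prod.mk.injEq, Fin.reduceEq, and_true, and_false, true_and, false_and, if_true, if_false,
      reduceIte, smul_eq_mul, mul_one, mul_zero, add_zero, zero_add, sub_zero, zero_sub,
      neg_zero, neg_neg, Fin.isValue] at E010
    have E011 := congrArg (fun F => F (((0 : Fin 4), (1 : Fin 4)), (1 : Fin 4))) hrep
    simp only [Finsupp.add_apply, Finsupp.sub_apply, Finsupp.smul_apply, Finsupp.single_apply,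
      Prod.mk.injEq, Fin.reduceEq, and_true, and_false, true_and, false_and, if_true, if_false,
      reduceIte, smul_eq_mul, mul_one, mul_zero, add_zero, zero_add, sub_zero, zero_sub,
      neg_zero, neg_neg, Fin.isValue] at E011
    have E012 := congrArg (fun F => F (((0 : Fin 4), (1 : Fin 4)), (2 : Fin 4))) hrep
    simp only [Finsupp.add_apply, Finsupp.sub_apply, Finsupp.smul_apply, Finsupp.single_apply,
      Prod.mk.injEq, Fin.reduceEq, and_true, and_false, true_and, false_and, if_true, if_false,
      reduceIte, smul_eq_mul, mul_one, mul_zero, add_zero, zero_add, sub_zero, zero_sub,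
      neg_zero, neg_neg, Fin.isValue] at E012
    have E013 := congrArg (fun F => F (((0 : Fin 4), (1 : Fin 4)), (3 : Fin 4))) hrep
    simp only [Finsupp.add_apply, Finsupp.sub_apply, Finsupp.smul_apply, Finsupp.single_apply,
      Prod.mk.injEq, Fin.reduceEq, and_true, and_false, true_and, false_and, if_true, if_false,
      reduceIte, smul_eq_mul, mul_one, mul_zero, add_zero, zero_add, sub_zero, zero_sub,
      neg_zero, neg_neg, Fin.isValue] at E013
    have E020 := congrArg (fun F => F (((0 : Fin 4), (2 : Fin 4)), (0 : Fin 4))) hrep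
    simp only [Finsupp.add_apply, Finsupp.sub_apply, Finsupp.smul_apply, Finsupp.single_apply,
      Prod.mk.injEq, Fin.reduceEq, and_true, and_false, true_and, false_and, if_true, if_false,
      reduceIte, smul_eq_mul, mul_one, mul_zero, add_zero, zero_add, sub_zero, zero_sub,
      neg_zero, neg_neg, Fin.isValue] at E020
    have E021 := congrArg (fun F => F (((0 : Fin 4), (2 : Fin 4)), (1 : Fin 4))) hrep
    simp only [Finsupp.add_apply, Finsupp.sub_apply, Finsupp.smul_apply, Finsupp.single_apply,
      Prod.mk.injEq, Fin.reduceEq, and_true, and_false, true_and, false_and, if_true, if_false,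
      reduceIte, smul_eq_mul, mul_one, mul_zero, add_zero, zero_add, sub_zero, zero_sub,
      neg_zero, neg_neg, Fin.isValue] at E021
    have E022 := congrArg (fun F => F (((0 : Fin 4), (2 : Fin 4)), (2 : Fin 4))) hrep
    simp only [Finsupp.add_apply, Finsupp.sub_apply, Finsupp.smul_apply, Finsupp.single_apply,
      Prod.mk.injEq, Fin.reduceEq, and_true, and_false, true_and, false_and, if_true, if_false,
      reduceIte, smul_eq_mul, mul_one, mul_zero, add_zero, zero_add, sub_zero, zero_sub,
      neg_zero, neg_neg, Fin.isValue] at E022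
    have E023 := congrArg (fun F => F (((0 : Fin 4), (2 : Fin 4)), (3 : Fin 4))) hrep
    simp only [Finsupp.add_apply, Finsupp.sub_apply, Finsupp.smul_apply, Finsupp.single_apply,
      Prod.mk.injEq, Fin.reduceEq, and_true, and_false, true_and, false_and, if_true, if_false,
      reduceIte, smul_eq_mul, mul_one, mul_zero, add_zero, zero_add, sub_zero, zero_sub,
      neg_zero, neg_neg, Fin.isValue] at E023
    have E030 := congrArg (fun F => F (((0 : Fin 4), (3 : Fin 4)), (0 : Fin 4))) hrep
    simp only [Finsupp.add_apply, Finsupp.sub_apply, Finsupp.smul_apply, Finsupp.single_apply,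
      Prod.mk.injEq, Fin.reduceEq, and_true, and_false, true_and, false_and, if_true, if_false,
      reduceIte, smul_eq_mul, mul_one, mul_zero, add_zero, zero_add, sub_zero, zero_sub,
      neg_zero, neg_neg, Fin.isValue] at E030
    have E031 := congrArg (fun F => F (((0 : Fin 4), (3 : Fin 4)), (1 : Fin 4))) hrep
    simp only [Finsupp.add_apply, Finsupp.sub_apply, Finsupp.smul_apply, Finsupp.single_apply,
      Prod.mk.injEq, Fin.reduceEq, and_true, and_false, true_and, false_and, if_true, if_false,
      reduceIte, smul_eq_mul, mul_one, mul_zero, add_zero, zero_add, sub_zero, zero_sub,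
      neg_zero, neg_neg, Fin.isValue] at E031
    have E032 := congrArg (fun F => F (((0 : Fin 4), (3 : Fin 4)), (2 : Fin 4))) hrep
    simp only [Finsupp.add_apply, Finsupp.sub_apply, Finsupp.smul_apply, Finsupp.single_apply,
      Prod.mk.injEq, Fin.reduceEq, and_true, and_false, true_and, false_and, if_true, if_false,
      reduceIte, smul_eq_mul, mul_one, mul_zero, add_zero, zero_add, sub_zero, zero_sub,
      neg_zero, neg_neg, Fin.isValue] at E032
    have E033 := congrArg (fun F => F (((0 : Fin 4), (3 : Fin 4)), (3 : Fin 4))) hrep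
    simp only [Finsupp.add_apply, Finsupp.sub_apply, Finsupp.smul_apply, Finsupp.single_apply,
      Prod.mk.injEq, Fin.reduceEq, and_true, and_false, true_and, false_and, if_true, if_false,
      reduceIte, smul_eq_mul, mul_one, mul_zero, add_zero, zero_add, sub_zero, zero_sub,
      neg_zero, neg_neg, Fin.isValue] at E033
    have E102 := congrArg (fun F => F (((1 : Fin 4), (0 : Fin 4)), (2 : Fin 4))) hrep
    simp only [Finsupp.add_apply, Finsupp.sub_apply, Finsupp.smul_apply, Finsupp.single_apply,
      Prod.mk.injEq, Fin.reduceEq, and_true, and_false, true_and, false_and, if_true, if_false,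
      reduceIte, smul_eq_mul, mul_one, mul_zero, add_zero, zero_add, sub_zero, zero_sub,
      neg_zero, neg_neg, Fin.isValue] at E102
    have E103 := congrArg (fun F => F (((1 : Fin 4), (0 : Fin 4)), (3 : Fin 4))) hrep
    simp only [Finsupp.add_apply, Finsupp.sub_apply, Finsupp.smul_apply, Finsupp.single_apply,
      Prod.mk.injEq, Fin.reduceEq, and_true, and_false, true_and, false_and, if_true, if_false,
      reduceIte, smul_eq_mul, mul_one, mul_zero, add_zero, zero_add, sub_zero, zero_sub,
      neg_zero, neg_neg, Fin.isValue] at E103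
    have E112 := congrArg (fun F => F (((1 : Fin 4), (1 : Fin 4)), (2 : Fin 4))) hrep
    simp only [Finsupp.add_apply, Finsupp.sub_apply, Finsupp.smul_apply, Finsupp.single_apply,
      Prod.mk.injEq, Fin.reduceEq, and_true, and_false, true_and, false_and, if_true, if_false,
      reduceIte, smul_eq_mul, mul_one, mul_zero, add_zero, zero_add, sub_zero, zero_sub,
      neg_zero, neg_neg, Fin.isValue] at E112
    have E113 := congrArg (fun F => F (((1 : Fin 4), (1 : Fin 4)), (3 : Fin 4))) hrep
    simp only [Finsupp.add_apply, Finsupp.sub_apply, Finsupp.smul_apply, Finsupp.single_apply,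
      Prod.mk.injEq, Fin.reduceEq, and_true, and_false, true_and, false_and, if_true, if_false,
      reduceIte, smul_eq_mul, mul_one, mul_zero, add_zero, zero_add, sub_zero, zero_sub,
      neg_zero, neg_neg, Fin.isValue] at E113
    have E120 := congrArg (fun F => F (((1 : Fin 4), (2 : Fin 4)), (0 : Fin 4))) hrep
    simp only [Finsupp.add_apply, Finsupp.sub_apply, Finsupp.smul_apply, Finsupp.single_apply,
      Prod.mk.injEq, Fin.reduceEq, and_true, and_false, true_and, false_and, if_true, if_false,
      reduceIte, smul_eq_mul, mul_one, mul_zero, add_zero, zero_add, sub_zero, zero_sub,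
      neg_zero, neg_neg, Fin.isValue] at E120
    have E121 := congrArg (fun F => F (((1 : Fin 4), (2 : Fin 4)), (1 : Fin 4))) hrep
    simp only [Finsupp.add_apply, Finsupp.sub_apply, Finsupp.smul_apply, Finsupp.single_apply,
      Prod.mk.injEq, Fin.reduceEq, and_true, and_false, true_and, false_and, if_true, if_false,
      reduceIte, smul_eq_mul, mul_one, mul_zero, add_zero, zero_add, sub_zero, zero_sub,
      neg_zero, neg_neg, Fin.isValue] at E121
    have E122 := congrArg (fun F => F (((1 : Fin 4), (2 : Fin 4)), (2 : Fin 4))) hrep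
    simp only [Finsupp.add_apply, Finsupp.sub_apply, Finsupp.smul_apply, Finsupp.single_apply,
      Prod.mk.injEq, Fin.reduceEq, and_true, and_false, true_and, false_and, if_true, if_false,
      reduceIte, smul_eq_mul, mul_one, mul_zero, add_zero, zero_add, sub_zero, zero_sub,
      neg_zero, neg_neg, Fin.isValue] at E122
    have E123 := congrArg (fun F => F (((1 : Fin 4), (2 : Fin 4)), (3 : Fin 4))) hrep
    simp only [Finsupp.add_apply, Finsupp.sub_apply, Finsupp.smul_apply, Finsupp.single_apply,
      Prod.mk.injEq, Fin.reduceEq, and_true, and_false, true_and, false_and, if_true, if_false,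
      reduceIte, smul_eq_mul, mul_one, mul_zero, add_zero, zero_add, sub_zero, zero_sub,
      neg_zero, neg_neg, Fin.isValue] at E123
    have E130 := congrArg (fun F => F (((1 : Fin 4), (3 : Fin 4)), (0 : Fin 4))) hrep
    simp only [Finsupp.add_apply, Finsupp.sub_apply, Finsupp.smul_apply, Finsupp.single_apply,
      Prod.mk.injEq, Fin.reduceEq, and_true, and_false, true_and, false_and, if_true, if_false,
      reduceIte, smul_eq_mul, mul_one, mul_zero, add_zero, zero_add, sub_zero, zero_sub,
      neg_zero, neg_neg, Fin.isValue] at E130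
    have E131 := congrArg (fun F => F (((1 : Fin 4), (3 : Fin 4)), (1 : Fin 4))) hrep
    simp only [Finsupp.add_apply, Finsupp.sub_apply, Finsupp.smul_apply, Finsupp.single_apply,
      Prod.mk.injEq, Fin.reduceEq, and_true, and_false, true_and, false_and, if_true, if_false,
      reduceIte, smul_eq_mul, mul_one, mul_zero, add_zero, zero_add, sub_zero, zero_sub,
      neg_zero, neg_neg, Fin.isValue] at E131
    have E132 := congrArg (fun F => F (((1 : Fin 4), (3 : Fin 4)), (2 : Fin 4))) hrep
    simp only [Finsupp.add_apply, Finsupp.sub_apply, Finsupp.smul_apply, Finsupp.single_apply,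
      Prod.mk.injEq, Fin.reduceEq, and_true, and_false, true_and, false_and, if_true, if_false,
      reduceIte, smul_eq_mul, mul_one, mul_zero, add_zero, zero_add, sub_zero, zero_sub,
      neg_zero, neg_neg, Fin.isValue] at E132
    have E133 := congrArg (fun F => F (((1 : Fin 4), (3 : Fin 4)), (3 : Fin 4))) hrep
    simp only [Finsupp.add_apply, Finsupp.sub_apply, Finsupp.smul_apply, Finsupp.single_apply,
      Prod.mk.injEq, Fin.reduceEq, and_true, and_false, true_and, false_and, if_true, if_false,
      reduceIte, smul_eq_mul, mul_one, mul_zero, add_zero, zero_add, sub_zero, zero_sub,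
      neg_zero, neg_neg, Fin.isValue] at E133
    have E203 := congrArg (fun F => F (((2 : Fin 4), (0 : Fin 4)), (3 : Fin 4))) hrep
    simp only [Finsupp.add_apply, Finsupp.sub_apply, Finsupp.smul_apply, Finsupp.single_apply,
      Prod.mk.injEq, Fin.reduceEq, and_true, and_false, true_and, false_and, if_true, if_false,
      reduceIte, smul_eq_mul, mul_one, mul_zero, add_zero, zero_add, sub_zero, zero_sub,
      neg_zero, neg_neg, Fin.isValue] at E203
    have E213 := congrArg (fun F => F (((2 : Fin 4), (1 : Fin 4)), (3 : Fin 4))) hrep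
    simp only [Finsupp.add_apply, Finsupp.sub_apply, Finsupp.smul_apply, Finsupp.single_apply,
      Prod.mk.injEq, Fin.reduceEq, and_true, and_false, true_and, false_and, if_true, if_false,
      reduceIte, smul_eq_mul, mul_one, mul_zero, add_zero, zero_add, sub_zero, zero_sub,
      neg_zero, neg_neg, Fin.isValue] at E213
    have E223 := congrArg (fun F => F (((2 : Fin 4), (2 : Fin 4)), (3 : Fin 4))) hrep
    simp only [Finsupp.add_apply, Finsupp.sub_apply, Finsupp.smul_apply, Finsupp.single_apply,
      Prod.mk.injEq, Fin.reduceEq, and_true, and_false, true_and, false_and, if_true, if_false,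
      reduceIte, smul_eq_mul, mul_one, mul_zero, add_zero, zero_add, sub_zero, zero_sub,
      neg_zero, neg_neg, Fin.isValue] at E223
    have E230 := congrArg (fun F => F (((2 : Fin 4), (3 : Fin 4)), (0 : Fin 4))) hrep
    simp only [Finsupp.add_apply, Finsupp.sub_apply, Finsupp.smul_apply, Finsupp.single_apply,
      Prod.mk.injEq, Fin.reduceEq, and_true, and_false, true_and, false_and, if_true, if_false,
      reduceIte, smul_eq_mul, mul_one, mul_zero, add_zero, zero_add, sub_zero, zero_sub,
      neg_zero, neg_neg, Fin.isValue] at E230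
    have E231 := congrArg (fun F => F (((2 : Fin 4), (3 : Fin 4)), (1 : Fin 4))) hrep
    simp only [Finsupp.add_apply, Finsupp.sub_apply, Finsupp.smul_apply, Finsupp.single_apply,
      Prod.mk.injEq, Fin.reduceEq, and_true, and_false, true_and, false_and, if_true, if_false,
      reduceIte, smul_eq_mul, mul_one, mul_zero, add_zero, zero_add, sub_zero, zero_sub,
      neg_zero, neg_neg, Fin.isValue] at E231
    have E232 := congrArg (fun F => F (((2 : Fin 4), (3 : Fin 4)), (2 : Fin 4))) hrep
    simp only [Finsupp.add_apply, Finsupp.sub_apply, Finsupp.smul_apply, Finsupp.single_apply,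
      Prod.mk.injEq, Fin.reduceEq, and_true, and_false, true_and, false_and, if_true, if_false,
      reduceIte, smul_eq_mul, mul_one, mul_zero, add_zero, zero_add, sub_zero, zero_sub,
      neg_zero, neg_neg, Fin.isValue] at E232
    have E233 := congrArg (fun F => F (((2 : Fin 4), (3 : Fin 4)), (3 : Fin 4))) hrep
    simp only [Finsupp.add_apply, Finsupp.sub_apply, Finsupp.smul_apply, Finsupp.single_apply,
      Prod.mk.injEq, Fin.reduceEq, and_true, and_false, true_and, false_and, if_true, if_false,
      reduceIte, smul_eq_mul, mul_one, mul_zero, add_zero, zero_add, sub_zero, zero_sub,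
      neg_zero, neg_neg, Fin.isValue] at E233
    have fa00 : a ((0 : Fin 6), (0 : Fin 4)) = (0 : k) := by
      linear_combination (-1 : k) * E001 + (-1 : k) * E010
    have fa01 : a ((0 : Fin 6), (1 : Fin 4)) = (0 : k) := by
      linear_combination (-1 : k) * E001 + (-1 : k) * E011
    have fa12 : a ((1 : Fin 6), (2 : Fin 4)) = (0 : k) := by
      linear_combination (-1 : k) * E223 + (-1 : k) * E232
    have fa13 : a ((1 : Fin 6), (3 : Fin 4)) = (0 : k) := by
      linear_combination E223 + (-1 : k) * E233
    have fa20 : a ((2 : Fin 6), (0 : Fin 4)) = (0 : k) := by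
      linear_combination (-1 : k) * E002 + E020
    have fa21 : a ((2 : Fin 6), (1 : Fin 4)) = (-1 : k) * a (0, 2) := by
      linear_combination (-1 : k) * E012 + E021
    have fa22 : a ((2 : Fin 6), (2 : Fin 4)) = (0 : k) := by
      linear_combination E022
    have fa23 : a ((2 : Fin 6), (3 : Fin 4)) = (-1 : k) * a (1, 0) := by
      linear_combination E203 + (-1 : k) * E230
    have fa30 : a ((3 : Fin 6), (0 : Fin 4)) = a (0, 2) := by
      linear_combination (-1 : k) * E102 + E120
    have fa31 : a ((3 : Fin 6), (1 : Fin 4)) = a (0, 2) := by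
      linear_combination (-1 : k) * E112 + E121
    have fa32 : a ((3 : Fin 6), (2 : Fin 4)) = (0 : k) := by
      linear_combination E122
    have fa33 : a ((3 : Fin 6), (3 : Fin 4)) = (-1 : k) * a (1, 1) := by
      linear_combination E213 + (-1 : k) * E231
    have fa40 : a ((4 : Fin 6), (0 : Fin 4)) = (0 : k) := by
      linear_combination (-1 : k) * E003 + E030
    have fa41 : a ((4 : Fin 6), (1 : Fin 4)) = (-1 : k) * a (0, 3) := by
      linear_combination (-1 : k) * E013 + E031
    have fa42 : a ((4 : Fin 6), (2 : Fin 4)) = a (1, 0) := by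
      linear_combination E023 + E032 + (-1 : k) * E203 + E230
    have fa43 : a ((4 : Fin 6), (3 : Fin 4)) = (-1 : k) * a (1, 0) := by
      linear_combination (-1 : k) * E023 + E033 + E203 + (-1 : k) * E230
    have fa50 : a ((5 : Fin 6), (0 : Fin 4)) = a (0, 3) := by
      linear_combination (-1 : k) * E103 + E130
    have fa51 : a ((5 : Fin 6), (1 : Fin 4)) = a (0, 3) := by
      linear_combination (-1 : k) * E113 + E131
    have fa52 : a ((5 : Fin 6), (2 : Fin 4)) = a (1, 1) := by
      linear_combination E123 + E132 + (-1 : k) * E213 + E231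
    have fa53 : a ((5 : Fin 6), (3 : Fin 4)) = (-1 : k) * a (1, 1) := by
      linear_combination (-1 : k) * E123 + E133 + E213 + (-1 : k) * E231
    have hxval : x = a ((0 : Fin 6), (2 : Fin 4)) • s₁ + a ((0 : Fin 6), (3 : Fin 4)) • s₂
        + a ((1 : Fin 6), (0 : Fin 4)) • s₃ + a ((1 : Fin 6), (1 : Fin 4)) • s₄ := by
      rw [← hax]
      simp only [Fintype.sum_prod_type, Fin.sum_univ_six, Fin.sum_univ_four,
        hR0, hR1, hR2, hR3, hR4, hR5]
      rw [fa00, fa01, fa12, fa13, fa20, fa21, fa22, fa23, fa30, fa31, fa32, fa33, fa40, fa41, fa42, fa43, fa50, fa51, fa52, fa53]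
      simp only [s₁, s₂, s₃, s₄]
      module
    rw [hxval]
    have hs1 : s₁ ∈ Submodule.span k {s₁, s₂, s₃, s₄} := Submodule.subset_span (by simp)
    have hs2 : s₂ ∈ Submodule.span k {s₁, s₂, s₃, s₄} := Submodule.subset_span (by simp)
    have hs3 : s₃ ∈ Submodule.span k {s₁, s₂, s₃, s₄} := Submodule.subset_span (by simp)
    have hs4 : s₄ ∈ Submodule.span k {s₁, s₂, s₃, s₄} := Submodule.subset_span (by simp)
    exact Submodule.add_mem _ (Submodule.add_mem _ (Submodule.add_mem _
      (Submodule.smul_mem _ _ hs1) (Submodule.smul_mem _ _ hs2))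
      (Submodule.smul_mem _ _ hs3)) (Submodule.smul_mem _ _ hs4)
end

section
/- Let q ∈ k be nonzero, A = k_q[u,v] the quantum plane with uv = qvu, and A' = k_q[u',v']. Define τ : A⊗A' → A'⊗A on generators by τ(u⊗u') = qu'⊗u, τ(u⊗v') = q²v'⊗u, τ(v⊗u') = q²u'⊗v + (q−q³)v'⊗u, τ(v⊗v') = qv'⊗v (extended as a graded twisting map). Then the algebra R generated by u, v, u', v' with relations uv = qvu, u'v' = qv'u', uu' = qu'u, vu' = q²u'v + (q−q³)v'u, uv' = q²v'u, vv' = qv'v has k-basis {(u')^{i₁}(v')^{i₂}u^{i₃}v^{i₄} : i₁,i₂,i₃,i₄ ∈ ℕ}. -/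
open FreeAlgebra

/-- The defining relations of the twisted tensor product `k_q[u',v'] ⊗^τ k_q[u,v]` of
two quantum planes, on generators `u = ι 0`, `v = ι 1`, `u' = ι 2`, `v' = ι 3`:
`uv = qvu`, `u'v' = qv'u'`, `uu' = qu'u`, `vu' = q²u'v + (q−q³)v'u`,
`uv' = q²v'u`, `vv' = qv'v`. -/
inductive TTPRel (k : Type*) [Field k] (q : k) :
    FreeAlgebra k (Fin 4) → FreeAlgebra k (Fin 4) → Prop
  | uv : TTPRel k q (ι k 0 * ι k 1) (q • (ι k 1 * ι k 0))
  | u'v' : TTPRel k q (ι k 2 * ι k 3) (q • (ι k 3 * ι k 2))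
  | uu' : TTPRel k q (ι k 0 * ι k 2) (q • (ι k 2 * ι k 0))
  | vu' : TTPRel k q (ι k 1 * ι k 2)
      (q ^ 2 • (ι k 2 * ι k 1) + (q - q ^ 3) • (ι k 3 * ι k 0))
  | uv' : TTPRel k q (ι k 0 * ι k 3) (q ^ 2 • (ι k 3 * ι k 0))
  | vv' : TTPRel k q (ι k 1 * ι k 3) (q • (ι k 3 * ι k 1))

/-!
Left multiplication by each generator sends a normal-ordered monomial `u'^a v'^b u^c v^d` to a
combination of normal-ordered monomials; the only case that is not a single monomial is
`v u'^a = q^(2a) u'^a v + (q - q^(2a+1)) u'^(a-1) v' u`. So the monomials span. Conversely, the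
same rewriting rules define four operators on the free module `k[ℕ⁴]`, and checking that they
satisfy the six defining relations (the overlap conditions of the diamond lemma) makes `k[ℕ⁴]` a
module over the algebra. Acting on the basis vector at `0` then inverts the map that sends
coefficients to the corresponding combination of monomials.
-/

open Finsupp

section SkewCommute

variable {k A : Type*} [Semiring A]

theorem mul_pow_eq_smul_pow_mul [CommSemiring k] [Algebra k A] {x y : A} {c : k}
    (h : x * y = c • (y * x)) (n : ℕ) : x * y ^ n = c ^ n • (y ^ n * x) := by
  induction n with
  | zero => simp
  | succ n ih =>
    rw [pow_succ, ← mul_assoc, ih, smul_mul_assoc, mul_assoc, h, mul_smul_comm, smul_smul,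
      ← mul_assoc, ← pow_succ, ← pow_succ]

-- The form with a tail `t` is the one `simp` can apply inside right-associated products.
theorem mul_pow_mul_eq_smul [CommSemiring k] [Algebra k A] {x y : A} {c : k}
    (h : x * y = c • (y * x)) (n : ℕ) (t : A) :
    x * (y ^ n * t) = c ^ n • (y ^ n * (x * t)) := by
  rw [← mul_assoc, mul_pow_eq_smul_pow_mul h, smul_mul_assoc, mul_assoc]

theorem mul_eq_inv_smul_of_mul_eq_smul [Semifield k] [Algebra k A] {x y : A} {c : k}
    (hc : c ≠ 0) (h : x * y = c • (y * x)) : y * x = c⁻¹ • (x * y) := by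
  rw [h, smul_smul, inv_mul_cancel₀ hc, one_smul]

end SkewCommute

namespace TwistedQuantumPlane

variable {k : Type*} [Field k]

section Monomials

variable (q : k)

noncomputable def u : RingQuot (TTPRel k q) := RingQuot.mkAlgHom k (TTPRel k q) (ι k 0)
noncomputable def v : RingQuot (TTPRel k q) := RingQuot.mkAlgHom k (TTPRel k q) (ι k 1)
noncomputable def u' : RingQuot (TTPRel k q) := RingQuot.mkAlgHom k (TTPRel k q) (ι k 2)
noncomputable def v' : RingQuot (TTPRel k q) := RingQuot.mkAlgHom k (TTPRel k q) (ι k 3)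

theorem u_mul_v : u q * v q = q • (v q * u q) := by
  simpa only [u, v, map_mul, map_smul] using RingQuot.mkAlgHom_rel (s := TTPRel k q) k .uv

theorem u'_mul_v' : u' q * v' q = q • (v' q * u' q) := by
  simpa only [u', v', map_mul, map_smul] using RingQuot.mkAlgHom_rel (s := TTPRel k q) k .u'v'

theorem u_mul_u' : u q * u' q = q • (u' q * u q) := by
  simpa only [u, u', map_mul, map_smul] using RingQuot.mkAlgHom_rel (s := TTPRel k q) k .uu'

theorem v_mul_u' : v q * u' q = q ^ 2 • (u' q * v q) + (q - q ^ 3) • (v' q * u q) := by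
  simpa only [u, v, u', v', map_mul, map_smul, map_add] using
    RingQuot.mkAlgHom_rel (s := TTPRel k q) k .vu'

theorem u_mul_v' : u q * v' q = q ^ 2 • (v' q * u q) := by
  simpa only [u, v', map_mul, map_smul] using RingQuot.mkAlgHom_rel (s := TTPRel k q) k .uv'

theorem v_mul_v' : v q * v' q = q • (v' q * v q) := by
  simpa only [v, v', map_mul, map_smul] using RingQuot.mkAlgHom_rel (s := TTPRel k q) k .vv'

theorem v_mul_u (hq : q ≠ 0) : v q * u q = q⁻¹ • (u q * v q) :=
  mul_eq_inv_smul_of_mul_eq_smul hq (u_mul_v q)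

theorem v'_mul_u' (hq : q ≠ 0) : v' q * u' q = q⁻¹ • (u' q * v' q) :=
  mul_eq_inv_smul_of_mul_eq_smul hq (u'_mul_v' q)

noncomputable def monomial (i : ℕ × ℕ × ℕ × ℕ) : RingQuot (TTPRel k q) :=
  u' q ^ i.1 * v' q ^ i.2.1 * u q ^ i.2.2.1 * v q ^ i.2.2.2

theorem u'_mul_monomial (a b c d : ℕ) :
    u' q * monomial q (a, b, c, d) = monomial q (a + 1, b, c, d) := by
  simp only [monomial, pow_succ', mul_assoc]

theorem v'_mul_monomial (hq : q ≠ 0) (a b c d : ℕ) :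
    v' q * monomial q (a, b, c, d) = q⁻¹ ^ a • monomial q (a, b + 1, c, d) := by
  simp only [monomial, mul_assoc, pow_succ', mul_pow_mul_eq_smul (v'_mul_u' q hq)]

theorem u_mul_monomial (a b c d : ℕ) :
    u q * monomial q (a, b, c, d) = q ^ (a + 2 * b) • monomial q (a, b, c + 1, d) := by
  simp only [monomial, mul_assoc, pow_succ', mul_pow_mul_eq_smul (u_mul_u' q),
    mul_pow_mul_eq_smul (u_mul_v' q), mul_smul_comm, smul_smul, pow_add, pow_mul]

theorem v_mul_u'_pow_succ (hq : q ≠ 0) (a : ℕ) :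
    v q * u' q ^ (a + 1) = q ^ (2 * a + 2) • (u' q ^ (a + 1) * v q)
      + (q - q ^ (2 * a + 3)) • (u' q ^ a * (v' q * u q)) := by
  induction a with
  | zero => simpa using v_mul_u' q
  | succ a ih =>
    -- multiply by `u'` on the right: the second coefficient obeys `c (a+1) = q^(2a+2)(q-q³) + c a`
    rw [pow_succ _ (a + 1), ← mul_assoc, ih]
    simp only [add_mul, smul_mul_assoc, mul_assoc, v_mul_u', u_mul_u', mul_add, mul_smul_comm]
    rw [← mul_assoc (v' q), v'_mul_u' q hq]
    simp only [smul_mul_assoc, mul_smul_comm, mul_assoc, ← pow_succ,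
      ← mul_assoc (u' q ^ a) (u' q)]
    rw [smul_smul q, mul_inv_cancel₀ hq, one_smul]
    module

theorem v_mul_monomial (hq : q ≠ 0) (a b c d : ℕ) :
    v q * monomial q (a, b, c, d) =
      (q ^ (2 * a + b) * q⁻¹ ^ c) • monomial q (a, b, c, d + 1)
        + (q ^ (2 * b) * (q - q ^ (2 * a + 1))) • monomial q (a - 1, b + 1, c + 1, d) := by
  have hvu := mul_pow_mul_eq_smul (v_mul_u q hq)
  have hvv' := mul_pow_mul_eq_smul (v_mul_v' q)
  cases a with
  | zero =>
    simp only [zero_add, pow_one, sub_self, mul_zero, zero_smul, add_zero]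
    simp only [monomial, pow_zero, one_mul, mul_assoc, pow_succ', hvv', hvu,
      mul_smul_comm, smul_smul]
  | succ a =>
    simp only [monomial, Nat.add_sub_cancel, mul_assoc]
    rw [← mul_assoc (v q), v_mul_u'_pow_succ q hq]
    simp only [add_mul, smul_mul_assoc, mul_assoc, pow_succ', hvv', hvu,
      mul_pow_mul_eq_smul (u_mul_v' q), mul_smul_comm, smul_smul]
    module

end Monomials

section Operators

variable (q : k)

noncomputable def mulU' : Module.End k (ℕ × ℕ × ℕ × ℕ →₀ k) :=
  linearCombination k fun ⟨a, b, c, d⟩ => single (a + 1, b, c, d) 1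

noncomputable def mulV' : Module.End k (ℕ × ℕ × ℕ × ℕ →₀ k) :=
  linearCombination k fun ⟨a, b, c, d⟩ => single (a, b + 1, c, d) (q⁻¹ ^ a)

noncomputable def mulU : Module.End k (ℕ × ℕ × ℕ × ℕ →₀ k) :=
  linearCombination k fun ⟨a, b, c, d⟩ => single (a, b, c + 1, d) (q ^ (a + 2 * b))

/-- At `a = 0` the second coefficient is `q - q = 0`, so the truncated `a - 1` is harmless. -/
noncomputable def mulV : Module.End k (ℕ × ℕ × ℕ × ℕ →₀ k) :=
  linearCombination k fun ⟨a, b, c, d⟩ =>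
    single (a, b, c, d + 1) (q ^ (2 * a + b) * q⁻¹ ^ c)
      + single (a - 1, b + 1, c + 1, d) (q ^ (2 * b) * (q - q ^ (2 * a + 1)))

variable {q}

theorem mulU'_single (a b c d : ℕ) (r : k) :
    mulU' (single (a, b, c, d) r) = single (a + 1, b, c, d) r := by
  simp [mulU']

theorem mulV'_single (a b c d : ℕ) (r : k) :
    mulV' q (single (a, b, c, d) r) = single (a, b + 1, c, d) (r * q⁻¹ ^ a) := by
  simp [mulV']

theorem mulU_single (a b c d : ℕ) (r : k) :
    mulU q (single (a, b, c, d) r) = single (a, b, c + 1, d) (r * q ^ (a + 2 * b)) := by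
  simp [mulU]

theorem mulV_single (a b c d : ℕ) (r : k) :
    mulV q (single (a, b, c, d) r) =
      single (a, b, c, d + 1) (r * (q ^ (2 * a + b) * q⁻¹ ^ c))
        + single (a - 1, b + 1, c + 1, d) (r * (q ^ (2 * b) * (q - q ^ (2 * a + 1)))) := by
  simp only [mulV, linearCombination_single, smul_add, smul_single, smul_eq_mul]

theorem mulU_mul_mulV (hq : q ≠ 0) : mulU q * mulV q = q • (mulV q * mulU q) := by
  refine lhom_ext fun ⟨a, b, c, d⟩ r => ?_
  simp only [Module.End.mul_apply, LinearMap.smul_apply, mulU_single, mulV_single, map_add,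
    smul_add, smul_single, smul_eq_mul]
  congr 2
  · simp only [inv_pow, pow_succ]
    field_simp
  · rcases a with _ | a
    · simp
    · simp only [Nat.add_sub_cancel]
      ring

theorem mulU'_mul_mulV' (hq : q ≠ 0) : mulU' * mulV' q = q • (mulV' q * mulU') := by
  refine lhom_ext fun ⟨a, b, c, d⟩ r => ?_
  simp only [Module.End.mul_apply, LinearMap.smul_apply, mulU'_single, mulV'_single,
    smul_single, smul_eq_mul]
  congr 1
  simp only [inv_pow, pow_succ]
  field_simp

theorem mulU_mul_mulU' : mulU q * mulU' = q • (mulU' * mulU q) := by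
  refine lhom_ext fun ⟨a, b, c, d⟩ r => ?_
  simp only [Module.End.mul_apply, LinearMap.smul_apply, mulU'_single, mulU_single,
    smul_single, smul_eq_mul]
  congr 1
  ring

theorem mulV_mul_mulU' (hq : q ≠ 0) :
    mulV q * mulU' = q ^ 2 • (mulU' * mulV q) + (q - q ^ 3) • (mulV' q * mulU q) := by
  refine lhom_ext fun ⟨a, b, c, d⟩ r => ?_
  simp only [Module.End.mul_apply, LinearMap.smul_apply, LinearMap.add_apply, mulU'_single,
    mulU_single, mulV_single, mulV'_single, map_add, smul_add, smul_single, smul_eq_mul]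
  rcases a with _ | a
  · simp only [Nat.zero_sub, Nat.zero_add, mul_zero, pow_one, sub_self, single_zero, add_zero]
    congr 2 <;> ring
  · simp only [Nat.add_sub_cancel]
    rw [add_assoc (single _ _), ← single_add]
    congr 2
    · ring
    · simp only [inv_pow, pow_succ]
      field_simp
      ring

theorem mulU_mul_mulV' : mulU q * mulV' q = q ^ 2 • (mulV' q * mulU q) := by
  refine lhom_ext fun ⟨a, b, c, d⟩ r => ?_
  simp only [Module.End.mul_apply, LinearMap.smul_apply, mulV'_single, mulU_single,
    smul_single, smul_eq_mul]
  congr 1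
  ring

theorem mulV_mul_mulV' (hq : q ≠ 0) : mulV q * mulV' q = q • (mulV' q * mulV q) := by
  refine lhom_ext fun ⟨a, b, c, d⟩ r => ?_
  simp only [Module.End.mul_apply, LinearMap.smul_apply, mulV'_single, mulV_single, map_add,
    smul_add, smul_single, smul_eq_mul]
  congr 2
  · ring
  · rcases a with _ | a
    · simp
    · simp only [Nat.add_sub_cancel, inv_pow, pow_succ]
      field_simp
      ring

theorem mulV_pow_single (d : ℕ) :
    (mulV q ^ d) (single (0, 0, 0, 0) 1) = single (0, 0, 0, d) 1 := by
  induction d with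
  | zero => rfl
  | succ d ih => simp [pow_succ', ih, mulV_single]

theorem mulU_pow_single (c d : ℕ) :
    (mulU q ^ c) (single (0, 0, 0, d) 1) = single (0, 0, c, d) 1 := by
  induction c with
  | zero => rfl
  | succ c ih => simp [pow_succ', ih, mulU_single]

theorem mulV'_pow_single (b c d : ℕ) :
    (mulV' q ^ b) (single (0, 0, c, d) 1) = single (0, b, c, d) 1 := by
  induction b with
  | zero => rfl
  | succ b ih => simp [pow_succ', ih, mulV'_single]

theorem mulU'_pow_single (a b c d : ℕ) :
    (mulU' ^ a) (single (0, b, c, d) (1 : k)) = single (a, b, c, d) 1 := by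
  induction a with
  | zero => rfl
  | succ a ih => simp [pow_succ', ih, mulU'_single]

end Operators

section PBW

open LinearMap (mulLeft mulLeft_apply mulLeft_mul comp_apply comp_assoc comp_add)

variable (q : k)

noncomputable def action (hq : q ≠ 0) :
    RingQuot (TTPRel k q) →ₐ[k] Module.End k (ℕ × ℕ × ℕ × ℕ →₀ k) :=
  RingQuot.liftAlgHom k ⟨FreeAlgebra.lift k ![mulU q, mulV q, mulU', mulV' q], fun _ _ h => by
    cases h <;> simp [mulU_mul_mulV hq, mulU'_mul_mulV' hq, mulU_mul_mulU', mulV_mul_mulU' hq,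
      mulU_mul_mulV', mulV_mul_mulV' hq]⟩

theorem action_mk_ι (hq : q ≠ 0) (j : Fin 4) :
    action q hq (RingQuot.mkAlgHom k (TTPRel k q) (ι k j)) = ![mulU q, mulV q, mulU', mulV' q] j :=
  (RingQuot.liftAlgHom_mkAlgHom_apply _ _ _ _).trans (FreeAlgebra.lift_ι_apply _ _)

theorem action_monomial_single_zero (hq : q ≠ 0) (i : ℕ × ℕ × ℕ × ℕ) :
    action q hq (monomial q i) (single 0 1) = single i 1 := by
  obtain ⟨a, b, c, d⟩ := i
  simp only [monomial, u, v, u', v', map_mul, map_pow, action_mk_ι, Matrix.cons_val,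
    Module.End.mul_apply]
  rw [show (0 : ℕ × ℕ × ℕ × ℕ) = (0, 0, 0, 0) from rfl, mulV_pow_single, mulU_pow_single,
    mulV'_pow_single, mulU'_pow_single]

noncomputable def ofCoeffs : (ℕ × ℕ × ℕ × ℕ →₀ k) →ₗ[k] RingQuot (TTPRel k q) :=
  linearCombination k (monomial q)

theorem ofCoeffs_single (i : ℕ × ℕ × ℕ × ℕ) (r : k) :
    ofCoeffs q (single i r) = r • monomial q i :=
  linearCombination_single k r i

theorem ofCoeffs_comp_mulU' : ofCoeffs q ∘ₗ mulU' = mulLeft k (u' q) ∘ₗ ofCoeffs q :=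
  lhom_ext fun ⟨a, b, c, d⟩ r => by
    simp only [comp_apply, mulLeft_apply, mulU'_single, ofCoeffs_single, mul_smul_comm,
      u'_mul_monomial]

theorem ofCoeffs_comp_mulV' (hq : q ≠ 0) :
    ofCoeffs q ∘ₗ mulV' q = mulLeft k (v' q) ∘ₗ ofCoeffs q :=
  lhom_ext fun ⟨a, b, c, d⟩ r => by
    simp only [comp_apply, mulLeft_apply, mulV'_single, ofCoeffs_single, mul_smul_comm,
      v'_mul_monomial q hq, smul_smul]

theorem ofCoeffs_comp_mulU : ofCoeffs q ∘ₗ mulU q = mulLeft k (u q) ∘ₗ ofCoeffs q :=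
  lhom_ext fun ⟨a, b, c, d⟩ r => by
    simp only [comp_apply, mulLeft_apply, mulU_single, ofCoeffs_single, mul_smul_comm,
      u_mul_monomial, smul_smul]

theorem ofCoeffs_comp_mulV (hq : q ≠ 0) :
    ofCoeffs q ∘ₗ mulV q = mulLeft k (v q) ∘ₗ ofCoeffs q :=
  lhom_ext fun ⟨a, b, c, d⟩ r => by
    simp only [comp_apply, mulLeft_apply, mulV_single, map_add, ofCoeffs_single, mul_smul_comm,
      v_mul_monomial q hq, smul_add, smul_smul]

theorem ofCoeffs_comp_action (hq : q ≠ 0) (a : RingQuot (TTPRel k q)) :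
    ofCoeffs q ∘ₗ action q hq a = mulLeft k a ∘ₗ ofCoeffs q := by
  obtain ⟨w, rfl⟩ := RingQuot.mkAlgHom_surjective k (TTPRel k q) a
  induction w using FreeAlgebra.induction with
  | grade0 r =>
    refine LinearMap.ext fun x => ?_
    simp only [AlgHom.commutes, comp_apply, mulLeft_apply, Module.algebraMap_end_apply, map_smul,
      Algebra.smul_def]
  | grade1 j =>
    rw [action_mk_ι]
    fin_cases j
    exacts [ofCoeffs_comp_mulU q, ofCoeffs_comp_mulV q hq, ofCoeffs_comp_mulU' q,
      ofCoeffs_comp_mulV' q hq]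
  | mul w₁ w₂ h₁ h₂ =>
    rw [map_mul, map_mul, Module.End.mul_eq_comp, ← comp_assoc, h₁, comp_assoc, h₂,
      ← comp_assoc, mulLeft_mul]
  | add w₁ w₂ h₁ h₂ =>
    rw [map_add, map_add, comp_add, h₁, h₂]
    exact LinearMap.ext fun x => (add_mul _ _ _).symm

noncomputable def pbwEquiv (hq : q ≠ 0) :
    (ℕ × ℕ × ℕ × ℕ →₀ k) ≃ₗ[k] RingQuot (TTPRel k q) :=
  .ofLinearMap (ofCoeffs q) (LinearMap.applyₗ (single 0 1) ∘ₗ (action q hq).toLinearMap)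
    (LinearMap.ext fun a => by
      simpa [ofCoeffs_single, monomial] using
        LinearMap.congr_fun (ofCoeffs_comp_action q hq a) (single 0 1))
    (lhom_ext fun i r => by simp [ofCoeffs_single, action_monomial_single_zero q hq])

noncomputable def pbwBasis (hq : q ≠ 0) :
    Module.Basis (ℕ × ℕ × ℕ × ℕ) k (RingQuot (TTPRel k q)) :=
  .ofRepr (pbwEquiv q hq).symm

theorem pbwBasis_apply (hq : q ≠ 0) (i : ℕ × ℕ × ℕ × ℕ) :
    pbwBasis q hq i = monomial q i := by
  simp [pbwBasis, pbwEquiv, ofCoeffs_single]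

end PBW

end TwistedQuantumPlane

open TwistedQuantumPlane in
/-- PBW basis for the twisted tensor product of two quantum planes: for `q ≠ 0`, the
algebra `R` generated by `u, v, u', v'` subject to the relations `uv = qvu`,
`u'v' = qv'u'`, `uu' = qu'u`, `vu' = q²u'v + (q−q³)v'u`, `uv' = q²v'u`, `vv' = qv'v`
has `k`-basis `{(u')^{i₁}(v')^{i₂}u^{i₃}v^{i₄} : i₁,i₂,i₃,i₄ ∈ ℕ}`. -/
theorem twisted_tensor_product_pbw_basis (k : Type*) [Field k] (q : k) (hq : q ≠ 0) :
    let π := RingQuot.mkAlgHom k (TTPRel k q)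
    let f : ℕ × ℕ × ℕ × ℕ → RingQuot (TTPRel k q) := fun i =>
      π (ι k 2) ^ i.1 * π (ι k 3) ^ i.2.1 * π (ι k 0) ^ i.2.2.1 * π (ι k 1) ^ i.2.2.2
    LinearIndependent k f ∧ Submodule.span k (Set.range f) = ⊤ := by
  intro π f
  have hf : f = pbwBasis q hq := funext fun i => (pbwBasis_apply q hq i).symm
  rw [hf]
  exact ⟨(pbwBasis q hq).linearIndependent, (pbwBasis q hq).span_eq⟩
end
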